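/- arXiv:2304.10980 — 9 statements merged into one kernel-verified Lean document; each statement's English description precedes it below -/
import Mathlib

section
/- Let A = [[a,b],[c,d]] ∈ SL₂(ℤ) with c ≠ 0 and |a + d| > 2. Then the open disks D(A) = B(a/c, 1/|c|) and D(A⁻¹) = B(-d/c, 1/|c|) are disjoint, and for any z ∈ ℍ with z not in the closure of D(A⁻¹), we have Az ∈ D(A). -/
/-!
Since `dist z (-d/c) = ‖c z + d‖ / ‖c‖`, a point outside the closed disk `D(A⁻¹)` has
`‖c z + d‖ > 1`; the determinant condition gives `Az - a/c = -1 / (c (c z + d))`, whose norm is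
then below `1 / ‖c‖`. The centres are `‖a + d‖ / ‖c‖ > 2 / ‖c‖` apart, so the disks are disjoint.
-/

open Metric

section MobiusDisks

variable {𝕜 : Type*} [NormedField 𝕜] {a b c d z : 𝕜}

lemma dist_div_neg_div (a d : 𝕜) (hc : c ≠ 0) : dist (a / c) (-d / c) = ‖a + d‖ / ‖c‖ := by
  rw [dist_eq_norm, ← norm_div]
  congr 1
  field_simp
  ring

lemma dist_neg_div_eq (hc : c ≠ 0) : dist z (-d / c) = ‖c * z + d‖ / ‖c‖ := by
  rw [dist_eq_norm, ← norm_div]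
  congr 1
  field_simp
  ring

lemma mobius_sub_div_eq (hdet : a * d - b * c = 1) (hc : c ≠ 0) (hz : c * z + d ≠ 0) :
    (a * z + b) / (c * z + d) - a / c = -(c * (c * z + d))⁻¹ := by
  rw [div_sub_div _ _ hz hc, neg_inv, inv_eq_one_div,
    div_eq_div_iff (mul_ne_zero hz hc) (neg_ne_zero.mpr (mul_ne_zero hc hz))]
  linear_combination (c * (c * z + d)) * hdet

lemma disjoint_ball_div_ball_neg_div (hc : c ≠ 0) (htr : 2 < ‖a + d‖) :
    Disjoint (ball (a / c) (1 / ‖c‖)) (ball (-d / c) (1 / ‖c‖)) := by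
  apply ball_disjoint_ball
  rw [dist_div_neg_div a d hc, ← add_div]
  gcongr
  linarith

lemma mobius_mem_ball_of_notMem_closedBall (hdet : a * d - b * c = 1) (hc : c ≠ 0)
    (hz : z ∉ closedBall (-d / c) (1 / ‖c‖)) :
    (a * z + b) / (c * z + d) ∈ ball (a / c) (1 / ‖c‖) := by
  have hc' : 0 < ‖c‖ := norm_pos_iff.mpr hc
  have hden : 1 < ‖c * z + d‖ := by
    rw [mem_closedBall, not_le, dist_neg_div_eq hc] at hz
    exact (div_lt_div_iff_of_pos_right hc').mp hz
  have hden0 : c * z + d ≠ 0 := norm_pos_iff.mp (one_pos.trans hden)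
  rw [mem_ball, dist_eq_norm, mobius_sub_div_eq hdet hc hden0, norm_neg, norm_inv, norm_mul,
    one_div]
  exact inv_strictAnti₀ hc' (lt_mul_of_one_lt_right hc' hden)

end MobiusDisks

/-- If `A = [[a,b],[c,d]] ∈ SL₂(ℤ)` with `c ≠ 0` and `|a + d| > 2`, then
the open disks `D(A) = B(a/c, 1/|c|)` and `D(A⁻¹) = B(-d/c, 1/|c|)` are disjoint, and
for `z ∈ ℍ` outside the closure of `D(A⁻¹)` we have `Az ∈ D(A)`. -/
theorem stmt2 (a b c d : ℤ) (hdet : a * d - b * c = 1) (hc : c ≠ 0)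
    (htr : |a + d| > 2) :
    Disjoint (Metric.ball ((a : ℂ) / (c : ℂ)) (1 / |(c : ℝ)|))
        (Metric.ball (-(d : ℂ) / (c : ℂ)) (1 / |(c : ℝ)|)) ∧
      ∀ z : ℂ, 0 < z.im →
        z ∉ Metric.closedBall (-(d : ℂ) / (c : ℂ)) (1 / |(c : ℝ)|) →
        ((a : ℂ) * z + (b : ℂ)) / ((c : ℂ) * z + (d : ℂ))
          ∈ Metric.ball ((a : ℂ) / (c : ℂ)) (1 / |(c : ℝ)|) := by
  have hcC : (c : ℂ) ≠ 0 := Int.cast_ne_zero.mpr hc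
  have hdetC : (a : ℂ) * d - b * c = 1 := by exact_mod_cast hdet
  have htrC : 2 < ‖(a : ℂ) + d‖ := by
    rw [← Int.cast_add, Complex.norm_intCast]
    exact_mod_cast htr
  rw [← Complex.norm_intCast]
  exact ⟨disjoint_ball_div_ball_neg_div hcC htrC,
    fun z _ hz => mobius_mem_ball_of_notMem_closedBall hdetC hcC hz⟩
end

section
/- Let A₁, ..., A_s ∈ SL₂(ℤ), each with nonzero lower-left entry, such that for every i ≠ j the four closed disks closure(D(A_i)), closure(D(A_i⁻¹)), closure(D(A_j)), closure(D(A_j⁻¹)) are pairwise disjoint, and for each i the closed disks closure(D(A_i)) and closure(D(A_i⁻¹)) are disjoint. Then A₁, ..., A_s freely generate a free subgroup of SL₂(ℤ); that is, no nonempty reduced word in A₁^{±1}, ..., A_s^{±1} equals the identity matrix. -/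
/-!
Ping-pong on the upper half-plane. For `g = [[a, b], [c, d]]` with `c ≠ 0` one has
`g • z - a / c = -1 / (c (c z + d))`, and `z` lies outside the closed disk of `g⁻¹`
(center `-d / c`, radius `1 / |c|`) exactly when `|c z + d| > 1`; so `g` maps the complement of
`closure D(g⁻¹)` into `D(g)`. The point `2i` lies above all these disks, and the disjointness
hypotheses let a reduced word push it, letter by letter from the right, into the disk of its
first letter; in particular the word does not fix `2i`.
-/

/-- The half-disk `D(A)` (as a full open disk in `ℂ`) attached to `A ∈ SL₂(ℤ)`:
the ball of center `a/c` and radius `1/|c|`. -/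
def pingDisk (A : Matrix.SpecialLinearGroup (Fin 2) ℤ) : Set ℂ :=
  Metric.ball (((A.1 0 0 : ℤ) : ℂ) / ((A.1 1 0 : ℤ) : ℂ)) (1 / |((A.1 1 0 : ℤ) : ℝ)|)

open UpperHalfPlane MatrixGroups

theorem prod_smul_mem_of_pingPong {G X : Type*} [Group G] [MulAction G X] (K : G → Set X)
    (x : X) {g : G} {w : List G} (hping : ∀ h ∈ g :: w, ∀ y ∉ K h⁻¹, h • y ∈ K h)
    (hchain : (g :: w).IsChain fun h h' => Disjoint (K h') (K h⁻¹))
    (hx : ∀ h ∈ g :: w, x ∉ K h⁻¹) : (g :: w).prod • x ∈ K g := by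
  induction w generalizing g with
  | nil => simpa using hping g (by simp) x (hx g (by simp))
  | cons g' w ih =>
    rw [List.isChain_cons_cons] at hchain
    have hmem : (g' :: w).prod • x ∈ K g' :=
      ih (fun h hh => hping h (List.mem_cons_of_mem _ hh)) hchain.2
        (fun h hh => hx h (List.mem_cons_of_mem _ hh))
    rw [List.prod_cons, mul_smul]
    exact hping g (by simp) _ (hchain.1.notMem_of_mem_left hmem)

theorem prod_ne_one_of_pingPong {G X : Type*} [Group G] [MulAction G X] (K : G → Set X)
    (x : X) {w : List G} (hw : w ≠ []) (hping : ∀ h ∈ w, ∀ y ∉ K h⁻¹, h • y ∈ K h)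
    (hchain : w.IsChain fun h h' => Disjoint (K h') (K h⁻¹))
    (hx : ∀ h ∈ w, x ∉ K h ∧ x ∉ K h⁻¹) : w.prod ≠ 1 := by
  obtain ⟨g, w, rfl⟩ := List.exists_cons_of_ne_nil hw
  intro hone
  have := prod_smul_mem_of_pingPong K x hping hchain fun h hh => (hx h hh).2
  rw [hone, one_smul] at this
  exact (hx g (by simp)).1 this

section

variable {g : SL(2, ℤ)}

lemma inv_apply_zero_zero (g : SL(2, ℤ)) : g⁻¹ 0 0 = g 1 1 := by
  simp [Matrix.SpecialLinearGroup.SL2_inv_expl]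

lemma inv_apply_one_zero (g : SL(2, ℤ)) : g⁻¹ 1 0 = -g 1 0 := by
  simp [Matrix.SpecialLinearGroup.SL2_inv_expl]

lemma zpow_apply_one_zero_ne_zero (hg : g 1 0 ≠ 0) {e : ℤ} (he : e = 1 ∨ e = -1) :
    (g ^ e) 1 0 ≠ 0 := by
  rcases he with rfl | rfl <;> simpa [inv_apply_one_zero] using hg

lemma closure_pingDisk (hg : g 1 0 ≠ 0) :
    closure (pingDisk g) = Metric.closedBall ((g 0 0 : ℂ) / g 1 0) (1 / |(g 1 0 : ℝ)|) :=
  closure_ball _ (by simpa using hg)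

lemma notMem_closure_pingDisk_of_one_lt_im (hg : g 1 0 ≠ 0) {z : ℂ} (hz : 1 < z.im) :
    z ∉ closure (pingDisk g) := by
  rw [closure_pingDisk hg, Metric.mem_closedBall, Complex.dist_eq, not_le]
  have hc : (1 : ℝ) ≤ |(g 1 0 : ℝ)| := by exact_mod_cast Int.one_le_abs hg
  have him : (z - g 0 0 / g 1 0).im = z.im := by
    simp [← Complex.ofReal_intCast, ← Complex.ofReal_div]
  calc 1 / |(g 1 0 : ℝ)| ≤ 1 := div_le_one_of_le₀ hc (abs_nonneg _)
    _ < z.im := hz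
    _ ≤ ‖z - g 0 0 / g 1 0‖ := him ▸ Complex.im_le_norm _

lemma coe_smul_sub_div (hg : g 1 0 ≠ 0) (z : ℍ) :
    ((g • z : ℍ) : ℂ) - g 0 0 / g 1 0 = -1 / (g 1 0 * (g 1 0 * z + g 1 1)) := by
  have hdet : (g 0 0 * g 1 1 - g 0 1 * g 1 0 : ℂ) = 1 := by
    exact_mod_cast (Matrix.det_fin_two (g : Matrix (Fin 2) (Fin 2) ℤ)).symm.trans g.det_coe
  have hc : (g 1 0 : ℂ) ≠ 0 := by exact_mod_cast hg
  have hdenom : (g 1 0 * z + g 1 1 : ℂ) ≠ 0 := by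
    intro h
    have := congrArg Complex.im h
    simp [hg, z.im_ne_zero] at this
  have hsmul : ((g • z : ℍ) : ℂ) = (g 0 0 * z + g 0 1) / (g 1 0 * z + g 1 1) := by
    rw [coe_specialLinearGroup_apply]; simp
  rw [hsmul, div_sub_div _ _ hdenom hc,
    div_eq_div_iff (mul_ne_zero hdenom hc) (mul_ne_zero hc hdenom)]
  linear_combination (-(g 1 0 * (g 1 0 * z + g 1 1) : ℂ)) * hdet

lemma one_lt_norm_denom (hg : g 1 0 ≠ 0) {z : ℂ} (hz : z ∉ closure (pingDisk g⁻¹)) :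
    1 < ‖(g 1 0 : ℂ) * z + g 1 1‖ := by
  have hcR : (0 : ℝ) < |(g 1 0 : ℝ)| := by simpa using hg
  rw [closure_pingDisk (by simpa [inv_apply_one_zero] using hg), inv_apply_one_zero,
    inv_apply_zero_zero, Metric.mem_closedBall, Complex.dist_eq, not_le] at hz
  have hcenter : z - (g 1 1 : ℂ) / ((-g 1 0 : ℤ) : ℂ) = (g 1 0 * z + g 1 1) / g 1 0 := by
    push_cast; field_simp; ring
  rw [hcenter, norm_div, Complex.norm_intCast, Int.cast_neg, abs_neg] at hz
  rwa [div_lt_div_iff_of_pos_right hcR] at hz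

lemma coe_smul_mem_pingDisk (hg : g 1 0 ≠ 0) {z : ℍ}
    (hz : (z : ℂ) ∉ closure (pingDisk g⁻¹)) :
    ((g • z : ℍ) : ℂ) ∈ pingDisk g := by
  have hcR : (0 : ℝ) < |(g 1 0 : ℝ)| := by simpa using hg
  have hdenom := one_lt_norm_denom hg hz
  rw [pingDisk, Metric.mem_ball, Complex.dist_eq, coe_smul_sub_div hg, norm_div, norm_neg,
    norm_one, norm_mul, Complex.norm_intCast,
    div_lt_div_iff_of_pos_left one_pos (by positivity) hcR]
  exact lt_mul_of_one_lt_right hcR hdenom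

end

lemma disjoint_closure_pingDisk_zpow {s : ℕ} {A : Fin s → SL(2, ℤ)}
    (hdisj : ∀ i j : Fin s, i ≠ j →
      Disjoint (closure (pingDisk (A i))) (closure (pingDisk (A j))) ∧
      Disjoint (closure (pingDisk (A i))) (closure (pingDisk ((A j)⁻¹))) ∧
      Disjoint (closure (pingDisk ((A i)⁻¹))) (closure (pingDisk (A j))) ∧
      Disjoint (closure (pingDisk ((A i)⁻¹))) (closure (pingDisk ((A j)⁻¹))))
    (hself : ∀ i, Disjoint (closure (pingDisk (A i))) (closure (pingDisk ((A i)⁻¹))))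
    {i j : Fin s} {ε δ : ℤ} (hε : ε = 1 ∨ ε = -1) (hδ : δ = 1 ∨ δ = -1)
    (hne : (i, ε) ≠ (j, δ)) :
    Disjoint (closure (pingDisk (A i ^ ε))) (closure (pingDisk (A j ^ δ))) := by
  by_cases hij : i = j
  · subst hij
    rcases hε with rfl | rfl <;> rcases hδ with rfl | rfl <;> simp_all [(hself i).symm]
  · rcases hε with rfl | rfl <;> rcases hδ with rfl | rfl <;> simp [hdisj i j hij]

/-- if `A₁, …, A_s ∈ SL₂(ℤ)` have nonzero lower-left entries, the closed
disks `closure (D(A_i)), closure (D(A_i⁻¹))` are pairwise disjoint (both across distinct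
indices and within each index), then no nonempty reduced word in the `A_i^{±1}` equals
the identity, i.e. the `A_i` freely generate a free subgroup. -/
theorem stmt3 (s : ℕ) (A : Fin s → Matrix.SpecialLinearGroup (Fin 2) ℤ)
    (hc : ∀ i, (A i).1 1 0 ≠ 0)
    (hdisj : ∀ i j : Fin s, i ≠ j →
      Disjoint (closure (pingDisk (A i))) (closure (pingDisk (A j))) ∧
      Disjoint (closure (pingDisk (A i))) (closure (pingDisk ((A j)⁻¹))) ∧
      Disjoint (closure (pingDisk ((A i)⁻¹))) (closure (pingDisk (A j))) ∧
      Disjoint (closure (pingDisk ((A i)⁻¹))) (closure (pingDisk ((A j)⁻¹))))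
    (hself : ∀ i, Disjoint (closure (pingDisk (A i))) (closure (pingDisk ((A i)⁻¹)))) :
    ∀ (m : ℕ), 1 ≤ m → ∀ (ν : ℕ → Fin s) (e : ℕ → ℤ),
      (∀ i < m, e i = 1 ∨ e i = -1) →
      (∀ i, i + 1 < m → ¬(ν (i + 1) = ν i ∧ e (i + 1) = -e i)) →
      ((List.range m).map (fun i => A (ν i) ^ e i)).prod ≠ 1 := by
  intro m hm ν e he hred
  have hletter : ∀ i < m, (A (ν i) ^ e i) 1 0 ≠ 0 := fun i hi =>
    zpow_apply_one_zero_ne_zero (hc _) (he i hi)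
  have hw : (List.range m).map (fun i => A (ν i) ^ e i) ≠ [] := by
    simp only [ne_eq, List.map_eq_nil_iff, List.range_eq_nil]; omega
  refine prod_ne_one_of_pingPong (fun g => (↑) ⁻¹' closure (pingDisk g))
    (⟨2 * Complex.I, by simp⟩ : ℍ) hw ?_ ?_ ?_
  · simp only [List.mem_map, List.mem_range]
    rintro _ ⟨i, hi, rfl⟩ z hz
    exact subset_closure (coe_smul_mem_pingDisk (hletter i hi) hz)
  · rw [List.isChain_map, List.isChain_range]
    intro i hi
    have hneg : -e i = 1 ∨ -e i = -1 := by rcases he i (by omega) with h | h <;> simp [h]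
    rw [← zpow_neg]
    refine (disjoint_closure_pingDisk_zpow hdisj hself (he _ (by omega)) hneg ?_).preimage _
    simpa using hred i (by omega)
  · simp only [List.mem_map, List.mem_range]
    rintro _ ⟨i, hi, rfl⟩
    have hbase : 1 < (2 * Complex.I).im := by norm_num
    exact ⟨notMem_closure_pingDisk_of_one_lt_im (hletter i hi) hbase,
      notMem_closure_pingDisk_of_one_lt_im
        (by simpa [inv_apply_one_zero] using hletter i hi) hbase⟩
end

section
/- For fixed real ε > 0 there is a constant C(ε) such that for all Q, Y, X with 1 ≤ Q ≤ Y ≤ X, the number of matrices [[a,b],[c,d]] ∈ SL₂(ℤ) with max(|a|,|b|,|c|,|d|) ≤ X, 0 < |c| ≤ Y, and Q ∣ c is at most C(ε) · X^{1+ε} · Y / Q. -/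
/-!
Fix the lower-left entry `c ≠ 0` and the upper-left entry `a`. Since `ad - bc = 1`, the entry `b`
is determined by `d` and, when `a ≠ 0`, `d` is determined by `b`; moreover `a` is coprime to `c`,
so all admissible `b` lie in a single residue class modulo `a`, leaving at most `2X/|a| + 1` of
them. Summing over `|a| ≤ X` gives `O(X log X)` matrices per `c`, there are at most `3Y/Q`
admissible `c`, and `log X ≤ X^ε/ε`.
-/

open Finset Real

theorem card_le_of_pairwise_modEq {q lo hi : ℤ} (hq : 0 < q) (hlh : lo ≤ hi) {S : Finset ℤ}
    (hS : S ⊆ Icc lo hi) (hmod : ∀ x ∈ S, ∀ y ∈ S, x ≡ y [ZMOD q]) :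
    (#S : ℝ) ≤ (hi - lo) / q + 1 := by
  set K := (hi - lo) / q
  have hmaps : Set.MapsTo (fun x => (x - lo) / q) S (Icc 0 K) := fun x hx => by
    obtain ⟨hlo, hhi⟩ := mem_Icc.mp (hS hx)
    exact mem_Icc.mpr ⟨Int.ediv_nonneg (by omega) hq.le, Int.ediv_le_ediv hq (by omega)⟩
  -- two points of `S` with the same quotient by `q` also share the remainder
  have hinj : Set.InjOn (fun x => (x - lo) / q) S := fun x hx y hy hxy => by
    have hrem : (x - lo) % q = (y - lo) % q := (hmod x hx y hy).sub_right lo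
    have hx' := Int.mul_ediv_add_emod (x - lo) q
    have hy' := Int.mul_ediv_add_emod (y - lo) q
    simp only at hxy
    rw [hxy, hrem] at hx'
    linarith
  have hcard : (#S : ℤ) ≤ K + 1 := by
    have h := card_le_card_of_injOn _ hmaps hinj
    have hK : 0 ≤ K := Int.ediv_nonneg (by omega) hq.le
    rw [Int.card_Icc] at h
    omega
  have hKq : (K : ℝ) * q ≤ hi - lo := by exact_mod_cast Int.ediv_mul_le (hi - lo) hq.ne'
  have hK : (K : ℝ) ≤ (hi - lo) / q := by rwa [le_div_iff₀ (by exact_mod_cast hq)]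
  have hcardR : (#S : ℝ) ≤ K + 1 := by exact_mod_cast hcard
  linarith

theorem sum_Icc_ite_inv_abs (N : ℕ) :
    ∑ a ∈ Icc (-(N : ℤ)) N, (if a = 0 then (1 : ℝ) else |(a : ℝ)|⁻¹) = 1 + 2 * harmonic N := by
  induction N with
  | zero => simp
  | succ n ih =>
    have hIcc : Icc (-((n + 1 : ℕ) : ℤ)) (n + 1 : ℕ)
        = insert (-(n + 1 : ℤ)) (insert (n + 1 : ℤ) (Icc (-(n : ℤ)) n)) := by
      ext x
      simp only [mem_insert, mem_Icc]
      omega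
    rw [hIcc, sum_insert (by simp only [mem_insert, mem_Icc]; omega),
      sum_insert (by simp only [mem_Icc]; omega), ih, if_neg (by omega), if_neg (by omega),
      harmonic_succ]
    push_cast
    rw [abs_neg, abs_of_pos (by positivity)]
    ring

noncomputable def sl2Fiber (N : ℕ) (a c : ℤ) : Finset (ℤ × ℤ) :=
  (Icc (-(N : ℤ)) N ×ˢ Icc (-(N : ℤ)) N).filter fun bd => a * bd.2 - bd.1 * c = 1

theorem card_sl2Fiber_le_of_right_ne_zero (N : ℕ) (a : ℤ) {c : ℤ} (hc : c ≠ 0) :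
    (#(sl2Fiber N a c) : ℝ) ≤ 2 * N + 1 := by
  have hinj : Set.InjOn Prod.snd (sl2Fiber N a c : Set (ℤ × ℤ)) := by
    rintro ⟨b, d⟩ hbd ⟨b', d'⟩ hbd' (rfl : d = d')
    have hdet := (mem_filter.mp (mem_coe.mp hbd)).2
    have hdet' := (mem_filter.mp (mem_coe.mp hbd')).2
    have : b = b' := mul_right_cancel₀ hc (by linarith)
    rw [this]
  have hsub : (sl2Fiber N a c).image Prod.snd ⊆ Icc (-(N : ℤ)) N := fun d hd => by
    obtain ⟨bd, hbd, rfl⟩ := mem_image.mp hd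
    exact (mem_product.mp (mem_filter.mp hbd).1).2
  have h := card_le_of_pairwise_modEq one_pos (by omega) hsub fun x _ y _ => Int.modEq_one
  rw [card_image_of_injOn hinj] at h
  push_cast at h
  linarith

theorem card_sl2Fiber_le_of_left_ne_zero (N : ℕ) {a : ℤ} (ha : a ≠ 0) (c : ℤ) :
    (#(sl2Fiber N a c) : ℝ) ≤ 2 * N / |(a : ℝ)| + 1 := by
  have hinj : Set.InjOn Prod.fst (sl2Fiber N a c : Set (ℤ × ℤ)) := by
    rintro ⟨b, d⟩ hbd ⟨b', d'⟩ hbd' (rfl : b = b')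
    have hdet := (mem_filter.mp (mem_coe.mp hbd)).2
    have hdet' := (mem_filter.mp (mem_coe.mp hbd')).2
    have : d = d' := mul_left_cancel₀ ha (by linarith)
    rw [this]
  have hsub : (sl2Fiber N a c).image Prod.fst ⊆ Icc (-(N : ℤ)) N := fun b hb => by
    obtain ⟨bd, hbd, rfl⟩ := mem_image.mp hb
    exact (mem_product.mp (mem_filter.mp hbd).1).1
  -- `a d - b c = 1` makes `a` coprime to `c`, so `a ∣ (b - b') c` forces `b ≡ b' [ZMOD a]`
  have hmod : ∀ b ∈ (sl2Fiber N a c).image Prod.fst, ∀ b' ∈ (sl2Fiber N a c).image Prod.fst,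
      b ≡ b' [ZMOD |a|] := by
    rintro _ hb _ hb'
    obtain ⟨⟨b, d⟩, hbd, rfl⟩ := mem_image.mp hb
    obtain ⟨⟨b', d'⟩, hbd', rfl⟩ := mem_image.mp hb'
    have hdet := (mem_filter.mp hbd).2
    have hdet' := (mem_filter.mp hbd').2
    have hcop : IsCoprime a c := ⟨d, -b, by linear_combination hdet⟩
    have hdvd : a ∣ (b' - b) * c := ⟨d' - d, by linear_combination hdet - hdet'⟩
    exact Int.modEq_iff_dvd.mpr ((abs_dvd _ _).mpr (hcop.dvd_of_dvd_mul_right hdvd))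
  have h := card_le_of_pairwise_modEq (abs_pos.mpr ha) (by omega) hsub hmod
  rw [card_image_of_injOn hinj] at h
  push_cast at h
  rwa [sub_neg_eq_add, ← two_mul] at h

theorem card_sl2Fiber_le (N : ℕ) (a : ℤ) {c : ℤ} (hc : c ≠ 0) :
    (#(sl2Fiber N a c) : ℝ) ≤ 2 * N * (if a = 0 then 1 else |(a : ℝ)|⁻¹) + 1 := by
  split_ifs with ha
  · simpa using card_sl2Fiber_le_of_right_ne_zero N a hc
  · simpa [div_eq_mul_inv] using card_sl2Fiber_le_of_left_ne_zero N ha c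

theorem sum_card_sl2Fiber_le (N : ℕ) (hN : 1 ≤ N) {c : ℤ} (hc : c ≠ 0) :
    ∑ a ∈ Icc (-(N : ℤ)) N, (#(sl2Fiber N a c) : ℝ) ≤ 9 * N * (1 + log N) := by
  have hNR : (1 : ℝ) ≤ N := by exact_mod_cast hN
  have hcard : (#(Icc (-(N : ℤ)) N) : ℝ) = 2 * N + 1 := by
    rw [Int.card_Icc, show (N : ℤ) + 1 - -N = ((2 * N + 1 : ℕ) : ℤ) by push_cast; ring,
      Int.toNat_natCast]
    push_cast; ring
  calc ∑ a ∈ Icc (-(N : ℤ)) N, (#(sl2Fiber N a c) : ℝ)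
      ≤ ∑ a ∈ Icc (-(N : ℤ)) N, (2 * N * (if a = 0 then 1 else |(a : ℝ)|⁻¹) + 1) :=
        sum_le_sum fun a _ => card_sl2Fiber_le N a hc
    _ = 2 * N * (1 + 2 * harmonic N) + (2 * N + 1) := by
        rw [sum_add_distrib, ← mul_sum, sum_Icc_ite_inv_abs, sum_const, nsmul_eq_mul, mul_one,
          hcard]
    _ ≤ 9 * N * (1 + log N) := by
        have hH := mul_le_mul_of_nonneg_left (harmonic_le_one_add_log N) (Nat.cast_nonneg' N)
        have hlog : 0 ≤ (N : ℝ) * log N := mul_nonneg (by positivity) (log_nonneg hNR)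
        nlinarith

theorem abs_intCast_le_iff_mem_Icc {X : ℝ} (hX : 0 ≤ X) (z : ℤ) :
    |(z : ℝ)| ≤ X ↔ z ∈ Icc (-(⌊X⌋₊ : ℤ)) ⌊X⌋₊ := by
  rw [Int.natCast_floor_eq_floor hX, mem_Icc, ← abs_le, ← Int.cast_abs, Int.le_floor]

theorem card_filter_dvd_le {Q : ℤ} (hQ : 0 < Q) {Y : ℝ} (hQY : Q ≤ Y) :
    (#((Icc (-(⌊Y⌋₊ : ℤ)) ⌊Y⌋₊).filter fun c => c ≠ 0 ∧ Q ∣ c) : ℝ) ≤ 3 * Y / Q := by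
  have hQR : (0 : ℝ) < Q := by exact_mod_cast hQ
  have hmod : ∀ x ∈ (Icc (-(⌊Y⌋₊ : ℤ)) ⌊Y⌋₊).filter (fun c => c ≠ 0 ∧ Q ∣ c),
      ∀ y ∈ (Icc (-(⌊Y⌋₊ : ℤ)) ⌊Y⌋₊).filter (fun c => c ≠ 0 ∧ Q ∣ c), x ≡ y [ZMOD Q] :=
    fun x hx y hy => (Int.modEq_zero_iff_dvd.mpr (mem_filter.mp hx).2.2).trans
      (Int.modEq_zero_iff_dvd.mpr (mem_filter.mp hy).2.2).symm
  have h := card_le_of_pairwise_modEq hQ (by omega) (filter_subset _ _) hmod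
  have hMY : (⌊Y⌋₊ : ℝ) ≤ Y := Nat.floor_le (by linarith)
  have hone : 1 ≤ Y / Q := by rw [le_div_iff₀ hQR]; linarith
  push_cast at h
  calc _ ≤ 2 * (⌊Y⌋₊ : ℝ) / Q + 1 := by rwa [sub_neg_eq_add, ← two_mul] at h
    _ ≤ 2 * Y / Q + Y / Q := by gcongr
    _ = 3 * Y / Q := by ring

theorem ncard_le_sum_card_sl2Fiber (Q : ℤ) {Y X : ℝ} (hY : 0 ≤ Y) (hX : 0 ≤ X) :
    ({p : ℤ × ℤ × ℤ × ℤ |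
        p.1 * p.2.2.2 - p.2.1 * p.2.2.1 = 1 ∧
        (|p.1| : ℝ) ≤ X ∧ (|p.2.1| : ℝ) ≤ X ∧ (|p.2.2.1| : ℝ) ≤ X ∧ (|p.2.2.2| : ℝ) ≤ X ∧
        p.2.2.1 ≠ 0 ∧ (|p.2.2.1| : ℝ) ≤ Y ∧ Q ∣ p.2.2.1}.ncard : ℝ)
      ≤ ∑ c ∈ (Icc (-(⌊Y⌋₊ : ℤ)) ⌊Y⌋₊).filter (fun c => c ≠ 0 ∧ Q ∣ c),
          ∑ a ∈ Icc (-(⌊X⌋₊ : ℤ)) ⌊X⌋₊, (#(sl2Fiber ⌊X⌋₊ a c) : ℝ) := by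
  set C := (Icc (-(⌊Y⌋₊ : ℤ)) ⌊Y⌋₊).filter (fun c => c ≠ 0 ∧ Q ∣ c)
  set F := (C ×ˢ Icc (-(⌊X⌋₊ : ℤ)) ⌊X⌋₊).biUnion fun ca =>
    (sl2Fiber ⌊X⌋₊ ca.2 ca.1).image fun bd => (ca.2, bd.1, ca.1, bd.2)
  have hsub : {p : ℤ × ℤ × ℤ × ℤ |
        p.1 * p.2.2.2 - p.2.1 * p.2.2.1 = 1 ∧
        (|p.1| : ℝ) ≤ X ∧ (|p.2.1| : ℝ) ≤ X ∧ (|p.2.2.1| : ℝ) ≤ X ∧ (|p.2.2.2| : ℝ) ≤ X ∧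
        p.2.2.1 ≠ 0 ∧ (|p.2.2.1| : ℝ) ≤ Y ∧ Q ∣ p.2.2.1} ⊆ F := by
    rintro ⟨a, b, c, d⟩ ⟨hdet, ha, hb, -, hd, hc0, hcY, hQc⟩
    simp only [F, C, coe_biUnion, coe_image, Set.mem_iUnion, Set.mem_image, mem_coe,
      mem_product, mem_filter]
    refine ⟨(c, a), ⟨⟨(abs_intCast_le_iff_mem_Icc hY c).mp hcY, hc0, hQc⟩,
      (abs_intCast_le_iff_mem_Icc hX a).mp ha⟩, (b, d), ?_, rfl⟩
    exact mem_filter.mpr ⟨mem_product.mpr ⟨(abs_intCast_le_iff_mem_Icc hX b).mp hb,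
      (abs_intCast_le_iff_mem_Icc hX d).mp hd⟩, hdet⟩
  have hcard : #F ≤ ∑ ca ∈ C ×ˢ Icc (-(⌊X⌋₊ : ℤ)) ⌊X⌋₊, #(sl2Fiber ⌊X⌋₊ ca.2 ca.1) :=
    card_biUnion_le.trans (sum_le_sum fun _ _ => card_image_le)
  rw [sum_product] at hcard
  exact_mod_cast ((Set.ncard_le_ncard hsub F.finite_toSet).trans_eq (Set.ncard_coe_finset F)).trans
    hcard

theorem mul_one_add_log_le_rpow {X ε : ℝ} (hX : 1 ≤ X) (hε : 0 < ε) :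
    X * (1 + log X) ≤ (1 + 1 / ε) * X ^ (1 + ε) := by
  have hlog := log_le_rpow_div (by linarith : 0 ≤ X) hε
  have hXε := one_le_rpow hX hε.le
  have h : 1 + log X ≤ (1 + 1 / ε) * X ^ ε := by
    calc 1 + log X ≤ X ^ ε + X ^ ε / ε := by linarith
      _ = (1 + 1 / ε) * X ^ ε := by ring
  rw [rpow_add (by linarith), rpow_one]
  nlinarith

/-- for fixed `ε > 0` there is `C(ε)` such that for `1 ≤ Q ≤ Y ≤ X`, the
number of `[[a,b],[c,d]] ∈ SL₂(ℤ)` with height at most `X`, `0 < |c| ≤ Y` and `Q ∣ c`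
is at most `C(ε) · X^{1+ε} · Y / Q`. -/
theorem stmt4 (ε : ℝ) (hε : 0 < ε) :
    ∃ C : ℝ, 0 < C ∧ ∀ (Q : ℤ) (Y X : ℝ), 1 ≤ Q → (Q : ℝ) ≤ Y → Y ≤ X →
      ({p : ℤ × ℤ × ℤ × ℤ |
          p.1 * p.2.2.2 - p.2.1 * p.2.2.1 = 1 ∧
          (|p.1| : ℝ) ≤ X ∧ (|p.2.1| : ℝ) ≤ X ∧ (|p.2.2.1| : ℝ) ≤ X ∧ (|p.2.2.2| : ℝ) ≤ X ∧
          p.2.2.1 ≠ 0 ∧ (|p.2.2.1| : ℝ) ≤ Y ∧ Q ∣ p.2.2.1}.ncard : ℝ)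
        ≤ C * X ^ (1 + ε) * Y / (Q : ℝ) := by
  refine ⟨27 * (1 + 1 / ε), by positivity, fun Q Y X hQ hQY hYX => ?_⟩
  have hQR : (1 : ℝ) ≤ Q := by exact_mod_cast hQ
  have hX : 1 ≤ X := by linarith
  have hN : 1 ≤ ⌊X⌋₊ := Nat.one_le_floor_iff X |>.mpr hX
  have hNX : (⌊X⌋₊ : ℝ) ≤ X := Nat.floor_le (by linarith)
  have hfiber : ∀ c ∈ (Icc (-(⌊Y⌋₊ : ℤ)) ⌊Y⌋₊).filter (fun c => c ≠ 0 ∧ Q ∣ c),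
      ∑ a ∈ Icc (-(⌊X⌋₊ : ℤ)) ⌊X⌋₊, (#(sl2Fiber ⌊X⌋₊ a c) : ℝ) ≤ 9 * X * (1 + log X) :=
    fun c hc => (sum_card_sl2Fiber_le _ hN (mem_filter.mp hc).2.1).trans <| by
      have := log_le_log (by positivity) hNX
      gcongr
  calc _ ≤ _ := ncard_le_sum_card_sl2Fiber Q (by linarith) (by linarith)
    _ ≤ #((Icc (-(⌊Y⌋₊ : ℤ)) ⌊Y⌋₊).filter (fun c => c ≠ 0 ∧ Q ∣ c)) * (9 * X * (1 + log X)) := by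
        simpa using sum_le_card_nsmul _ _ _ hfiber
    _ ≤ 3 * Y / Q * (9 * X * (1 + log X)) := by
        gcongr
        · have := log_nonneg hX
          positivity
        · exact card_filter_dvd_le (by omega) hQY
    _ = 27 * (X * (1 + log X)) * (Y / Q) := by ring
    _ ≤ 27 * ((1 + 1 / ε) * X ^ (1 + ε)) * (Y / Q) :=
        mul_le_mul_of_nonneg_right (by linarith [mul_one_add_log_le_rpow hX hε])
          (div_nonneg (by linarith) (by linarith))
    _ = 27 * (1 + 1 / ε) * X ^ (1 + ε) * Y / Q := by ring
end

section
/- For every ε > 0 there is a constant C(ε) such that for every integer t and every real X ≥ 2, the number of matrices [[a,b],[c,d]] ∈ SL₂(ℤ) with max(|a|,|b|,|c|,|d|) ≤ X, c ≠ 0, and a + d = t is at most C(ε) · X^{1+ε}. -/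
/-!
Fixing the trace `t` and the entry `a` forces `d = t - a` and `bc = a(t - a) - 1`. When this
is nonzero, `b` is one of its `O_ε(X^ε)` divisors and determines `c`; when it is zero, `c ≠ 0`
forces `b = 0` and `a = ±1`, leaving `O(X)` choices of `c`. Summing over the `O(X)` values of `a`
gives `O_ε(X^{1+ε})`.

The divisor bound comes from `τ(n) = ∏ (k_p + 1)` by comparing `k + 1` with `p^{kε}`: this costs
nothing once `p^ε ≥ 2`, and a factor depending only on `ε` for each of the finitely many smaller
primes.
-/

open Finset Real

theorem succ_le_mul_rpow_pow {ε x : ℝ} (hε : 0 < ε) (hx : 2 ≤ x) (k : ℕ) :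
    (k + 1 : ℝ) ≤ (1 + (ε * log 2)⁻¹) * (x ^ k) ^ ε := by
  set s := ε * log 2
  have hs : 0 < s := mul_pos hε (log_pos one_lt_two)
  have h2x : ((2 : ℝ) ^ k) ^ ε ≤ (x ^ k) ^ ε := by gcongr
  have hexp : 1 + k * s ≤ ((2 : ℝ) ^ k) ^ ε := by
    rw [rpow_def_of_pos (by positivity), log_pow, show (k : ℝ) * log 2 * ε = k * s by ring]
    linarith [add_one_le_exp (k * s)]
  calc (k + 1 : ℝ) ≤ (1 + s⁻¹) * (1 + k * s) := by
        have : (1 + s⁻¹) * (1 + k * s) = k + 1 + (s⁻¹ + k * s) := by field_simp; ring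
        rw [this]; linarith [show 0 ≤ s⁻¹ + k * s by positivity]
    _ ≤ (1 + s⁻¹) * (x ^ k) ^ ε := by gcongr; exact hexp.trans h2x

theorem succ_le_rpow_pow {ε x : ℝ} (hx : 0 ≤ x) (h : 2 ≤ x ^ ε) (k : ℕ) :
    (k + 1 : ℝ) ≤ (x ^ k) ^ ε :=
  calc (k + 1 : ℝ) ≤ 2 ^ k := by exact_mod_cast Nat.lt_two_pow_self
    _ ≤ (x ^ ε) ^ k := by gcongr
    _ = (x ^ k) ^ ε := by rw [← rpow_mul_natCast hx, ← rpow_natCast_mul hx, mul_comm]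

theorem Nat.exists_card_divisors_le_mul_rpow {ε : ℝ} (hε : 0 < ε) :
    ∃ C > 0, ∀ n : ℕ, n ≠ 0 → (#n.divisors : ℝ) ≤ C * (n : ℝ) ^ ε := by
  set M : ℝ := 1 + (ε * Real.log 2)⁻¹
  have hM : 1 ≤ M := le_add_of_nonneg_right (by have := Real.log_pos one_lt_two; positivity)
  -- only the primes `p < 2 ^ ε⁻¹`, those with `p ^ ε < 2`, contribute a factor `M`
  set P := ⌈(2 : ℝ) ^ ε⁻¹⌉₊
  refine ⟨M ^ P, by positivity, fun n hn => ?_⟩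
  have hprime : ∀ p ∈ n.primeFactors, (n.factorization p + 1 : ℝ) ≤
      (if p < P then M else 1) * ((p : ℝ) ^ n.factorization p) ^ ε := by
    intro p hp
    split_ifs with hpP
    · have hp2 : (2 : ℝ) ≤ p := by exact_mod_cast (prime_of_mem_primeFactors hp).two_le
      exact succ_le_mul_rpow_pow hε hp2 _
    · rw [one_mul]
      refine succ_le_rpow_pow p.cast_nonneg ?_ _
      rw [← not_lt, ← lt_rpow_inv_iff_of_pos p.cast_nonneg zero_le_two hε, not_lt]
      exact (Nat.le_ceil _).trans (by exact_mod_cast not_lt.mp hpP)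
  have hsmall : ∏ p ∈ n.primeFactors, (if p < P then M else 1) ≤ M ^ P := by
    rw [prod_ite, prod_const, prod_const_one, mul_one]
    refine pow_le_pow_right₀ hM ((card_le_card fun p hp => ?_).trans (card_range P).le)
    exact mem_range.mpr (mem_filter.mp hp).2
  calc (#n.divisors : ℝ) = ∏ p ∈ n.primeFactors, (n.factorization p + 1 : ℝ) := by
        rw [Nat.card_divisors hn]; push_cast; rfl
    _ ≤ ∏ p ∈ n.primeFactors, (if p < P then M else 1) * ((p : ℝ) ^ n.factorization p) ^ ε :=
        prod_le_prod (fun _ _ => by positivity) hprime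
    _ = (∏ p ∈ n.primeFactors, (if p < P then M else 1)) * (n : ℝ) ^ ε := by
        rw [prod_mul_distrib, finsetProd_rpow _ _ fun _ _ => by positivity]
        congr
        exact_mod_cast (Nat.prod_primeFactors_pow_factorization hn).symm
    _ ≤ M ^ P * (n : ℝ) ^ ε := by gcongr

theorem Int.card_divisors (z : ℤ) : #z.divisors = 2 * #z.natAbs.divisors := by
  rw [Int.divisors, card_disjUnion, card_map, card_map, two_mul]

theorem Int.exists_card_divisors_le_mul_rpow {ε : ℝ} (hε : 0 < ε) :
    ∃ C > 0, ∀ n : ℤ, n ≠ 0 → (#n.divisors : ℝ) ≤ C * |(n : ℝ)| ^ ε := by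
  obtain ⟨C, hC, hbound⟩ := Nat.exists_card_divisors_le_mul_rpow hε
  refine ⟨2 * C, by positivity, fun n hn => ?_⟩
  rw [Int.card_divisors, ← Int.cast_abs, Int.abs_eq_natAbs, Int.cast_natCast, mul_assoc]
  push_cast
  gcongr
  exact_mod_cast hbound n.natAbs (Int.natAbs_ne_zero.mpr hn)

def sl2TraceBox (t : ℤ) (N : ℕ) : Set (ℤ × ℤ × ℤ × ℤ) :=
  {p | p.1 * p.2.2.2 - p.2.1 * p.2.2.1 = 1 ∧ |p.1| ≤ N ∧ |p.2.1| ≤ N ∧ |p.2.2.1| ≤ N ∧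
    |p.2.2.2| ≤ N ∧ p.2.2.1 ≠ 0 ∧ p.1 + p.2.2.2 = t}

noncomputable def traceFiber (t : ℤ) (N : ℕ) (a : ℤ) : Finset (ℤ × ℤ × ℤ × ℤ) :=
  if a * (t - a) = 1 then (Icc (-N : ℤ) N).image fun c => (a, 0, c, t - a)
  else (a * (t - a) - 1).divisors.image fun b => (a, b, (a * (t - a) - 1) / b, t - a)

theorem sl2TraceBox_subset_biUnion_traceFiber (t : ℤ) (N : ℕ) :
    sl2TraceBox t N ⊆
      ((Icc (-N : ℤ) N).filter fun a => |t - a| ≤ N).biUnion (traceFiber t N) := by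
  rintro ⟨a, b, c, d⟩ ⟨hdet, ha, -, hc, hd, hc0, htr⟩
  dsimp only at hdet ha hc hd hc0 htr
  obtain rfl : d = t - a := by omega
  have hbc : b * c = a * (t - a) - 1 := by linarith
  simp only [coe_biUnion, coe_filter, Set.mem_iUnion, Set.mem_ofPred_eq, mem_coe]
  refine ⟨a, ⟨mem_Icc.mpr (abs_le.mp ha), hd⟩, ?_⟩
  unfold traceFiber
  split_ifs with hunit
  · obtain rfl : b = 0 := by simpa [hc0, hunit] using hbc
    exact mem_image.mpr ⟨c, mem_Icc.mpr (abs_le.mp hc), rfl⟩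
  · have hb0 : b ≠ 0 := by rintro rfl; omega
    refine mem_image.mpr ⟨b, Int.mem_divisors.mpr ⟨⟨c, hbc.symm⟩, by omega⟩, ?_⟩
    rw [← hbc, Int.mul_ediv_cancel_left c hb0]

theorem card_traceFiber_le_of_eq_one {t : ℤ} (N : ℕ) {a : ℤ} (h : a * (t - a) = 1) :
    #(traceFiber t N a) ≤ 2 * N + 1 := by
  rw [traceFiber, if_pos h]
  refine card_image_le.trans (le_of_eq ?_)
  rw [Int.card_Icc]
  omega

theorem card_traceFiber_le_of_ne_one {t : ℤ} (N : ℕ) {a : ℤ} (h : a * (t - a) ≠ 1) :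
    #(traceFiber t N a) ≤ #(a * (t - a) - 1).divisors := by
  rw [traceFiber, if_neg h]
  exact card_image_le

theorem ncard_sl2TraceBox_le (t : ℤ) (N : ℕ) {D : ℝ}
    (hD : ∀ n : ℤ, n ≠ 0 → |n| ≤ ((N : ℤ) + 1) ^ 2 → (#n.divisors : ℝ) ≤ D) :
    ((sl2TraceBox t N).ncard : ℝ) ≤ (2 * N + 1) * (D + 2) := by
  set s := (Icc (-N : ℤ) N).filter fun a => |t - a| ≤ N
  have hD0 : 0 ≤ D :=
    (Nat.cast_nonneg _).trans (hD 1 one_ne_zero (by rw [abs_one]; exact one_le_pow₀ (by omega)))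
  have hs : (#s : ℝ) ≤ 2 * N + 1 := by
    have : #s ≤ 2 * N + 1 := (card_filter_le _ _).trans (by rw [Int.card_Icc]; omega)
    exact_mod_cast this
  have hunits : #(s.filter fun a => a * (t - a) = 1) ≤ 2 := by
    refine (card_le_card fun a ha => ?_).trans (card_le_two (a := 1) (b := -1))
    rcases Int.eq_one_or_neg_one_of_mul_eq_one (mem_filter.mp ha).2 with rfl | rfl <;> simp
  have hdegenerate : ∑ a ∈ s.filter (fun a => a * (t - a) = 1), (#(traceFiber t N a) : ℝ) ≤
      2 * (2 * N + 1) := by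
    refine (sum_le_card_nsmul _ _ (2 * N + 1 : ℝ) fun a ha => ?_).trans ?_
    · exact_mod_cast card_traceFiber_le_of_eq_one N (mem_filter.mp ha).2
    · rw [nsmul_eq_mul]; gcongr; exact_mod_cast hunits
  have hgeneric : ∑ a ∈ s.filter (fun a => a * (t - a) ≠ 1), (#(traceFiber t N a) : ℝ) ≤
      #s * D := by
    refine (sum_le_card_nsmul _ _ D fun a ha => ?_).trans ?_
    · obtain ⟨has, hunit⟩ := mem_filter.mp ha
      obtain ⟨haN, htaN⟩ := mem_filter.mp has
      replace haN : |a| ≤ N := abs_le.mpr (mem_Icc.mp haN)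
      have hn : |a * (t - a) - 1| ≤ ((N : ℤ) + 1) ^ 2 := by
        have := abs_sub (a * (t - a)) 1
        rw [abs_mul, abs_one] at this
        nlinarith [abs_nonneg a, abs_nonneg (t - a)]
      exact (Nat.cast_le.mpr (card_traceFiber_le_of_ne_one N hunit)).trans
        (hD _ (sub_ne_zero.mpr hunit) hn)
    · rw [nsmul_eq_mul]; gcongr; exact filter_subset _ _
  calc ((sl2TraceBox t N).ncard : ℝ) ≤ #(s.biUnion (traceFiber t N)) := by
        exact_mod_cast (Set.ncard_le_ncard (sl2TraceBox_subset_biUnion_traceFiber t N)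
          (finite_toSet _)).trans_eq (Set.ncard_coe_finset _)
    _ ≤ ∑ a ∈ s, (#(traceFiber t N a) : ℝ) := by exact_mod_cast card_biUnion_le
    _ = ∑ a ∈ s.filter (fun a => a * (t - a) = 1), (#(traceFiber t N a) : ℝ) +
        ∑ a ∈ s.filter (fun a => a * (t - a) ≠ 1), (#(traceFiber t N a) : ℝ) :=
      (sum_filter_add_sum_filter_not _ _ _).symm
    _ ≤ 2 * (2 * N + 1) + (2 * N + 1) * D := by gcongr; exact hgeneric.trans (by gcongr)
    _ = (2 * N + 1) * (D + 2) := by ring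

theorem exists_ncard_sl2TraceBox_le_mul_rpow {ε : ℝ} (hε : 0 < ε) :
    ∃ C > 0, ∀ (t : ℤ) (N : ℕ), ((sl2TraceBox t N).ncard : ℝ) ≤ C * ((N : ℝ) + 1) ^ (1 + ε) := by
  obtain ⟨C₀, hC₀, hdiv⟩ := Int.exists_card_divisors_le_mul_rpow (half_pos hε)
  refine ⟨2 * C₀ + 4, by positivity, fun t N => ?_⟩
  set Y : ℝ := N + 1
  have hY : 1 ≤ Y := by simp [Y]
  have hD : ∀ n : ℤ, n ≠ 0 → |n| ≤ ((N : ℤ) + 1) ^ 2 → (#n.divisors : ℝ) ≤ C₀ * Y ^ ε := by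
    intro n hn hnN
    calc (#n.divisors : ℝ) ≤ C₀ * |(n : ℝ)| ^ (ε / 2) := hdiv n hn
      _ ≤ C₀ * (Y ^ 2) ^ (ε / 2) := by gcongr; simp only [Y]; exact_mod_cast hnN
      _ = C₀ * Y ^ ε := by rw [← rpow_natCast_mul (by positivity)]; ring_nf
  calc ((sl2TraceBox t N).ncard : ℝ) ≤ (2 * N + 1) * (C₀ * Y ^ ε + 2) :=
        ncard_sl2TraceBox_le t N hD
    _ ≤ 2 * Y * (C₀ * Y ^ ε + 2) := by gcongr; linarith
    _ = 2 * C₀ * Y ^ (1 + ε) + 4 * Y := by rw [rpow_add (by positivity), rpow_one]; ring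
    _ ≤ (2 * C₀ + 4) * Y ^ (1 + ε) := by
        nlinarith [self_le_rpow_of_one_le hY (by linarith : 1 ≤ 1 + ε)]

theorem abs_intCast_le_iff_le_natFloor {z : ℤ} {X : ℝ} (hX : 0 ≤ X) :
    |(z : ℝ)| ≤ X ↔ |z| ≤ (⌊X⌋₊ : ℤ) := by
  rw [← Int.cast_abs, Int.natCast_floor_eq_floor hX, Int.le_floor]

/-- for every `ε > 0` there is `C(ε)` such that for every integer `t` and
real `X ≥ 2`, the number of `[[a,b],[c,d]] ∈ SL₂(ℤ)` with height at most `X`, `c ≠ 0`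
and `a + d = t` is at most `C(ε) · X^{1+ε}`. -/
theorem stmt5 (ε : ℝ) (hε : 0 < ε) :
    ∃ C : ℝ, 0 < C ∧ ∀ (t : ℤ) (X : ℝ), 2 ≤ X →
      ({p : ℤ × ℤ × ℤ × ℤ |
          p.1 * p.2.2.2 - p.2.1 * p.2.2.1 = 1 ∧
          (|p.1| : ℝ) ≤ X ∧ (|p.2.1| : ℝ) ≤ X ∧ (|p.2.2.1| : ℝ) ≤ X ∧ (|p.2.2.2| : ℝ) ≤ X ∧
          p.2.2.1 ≠ 0 ∧ p.1 + p.2.2.2 = t}.ncard : ℝ)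
        ≤ C * X ^ (1 + ε) := by
  obtain ⟨C, hC, hbound⟩ := exists_ncard_sl2TraceBox_le_mul_rpow hε
  refine ⟨C * 2 ^ (1 + ε), by positivity, fun t X hX => ?_⟩
  have hX0 : 0 ≤ X := by linarith
  calc _ = ((sl2TraceBox t ⌊X⌋₊).ncard : ℝ) := by
        simp only [sl2TraceBox, abs_intCast_le_iff_le_natFloor hX0]
    _ ≤ C * ((⌊X⌋₊ : ℝ) + 1) ^ (1 + ε) := hbound t _
    _ ≤ C * (2 * X) ^ (1 + ε) := by gcongr; linarith [Nat.floor_le hX0]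
    _ = C * 2 ^ (1 + ε) * X ^ (1 + ε) := by rw [mul_rpow zero_le_two hX0, mul_assoc]
end

section
/- For every ε > 0 there is a constant C(ε) such that for all reals Q, Y, X with 1 ≤ Q ≤ Y ≤ X, the number of pairs of matrices (A₁, A₂) = ([[a₁,b₁],[c₁,d₁]], [[a₂,b₂],[c₂,d₂]]) in SL₂(ℤ)² with both heights at most X, both c₁, c₂ nonzero and divisible by Q, satisfying Y/2 < min(|c₁|, |c₂|) ≤ Y and |a₁/c₁ - a₂/c₂| ≤ 1/|c₁| + 1/|c₂|, is at most C(ε) · X^{3+ε} / Q². -/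
/-!
Fix the lower-left entries `c₁, c₂`, say with `|c₂| ≤ |c₁|`. Closeness of `a₁/c₁` and `a₂/c₂`
leaves at most five choices of `a₂` for each `a₁`, so `O(X)` pairs `(a₁, a₂)`. Given `aᵢ`, the
determinant makes `dᵢ` an inverse of `aᵢ` modulo `cᵢ`, so `dᵢ` takes `O(X / |cᵢ|)` values, and then
`bᵢ` is determined. Hence `O(X³ / |c₁ c₂|)` pairs have lower-left entries `c₁, c₂`, and summing
over nonzero multiples of `Q` of size at most `X` gives `O(X³ (1 + log X)² / Q²)`.
-/

open Finset Real

lemma Int.card_le_of_forall_mem_Icc {s : Finset ℤ} {u L : ℝ} (hL : 0 ≤ L)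
    (hs : ∀ x ∈ s, u ≤ x ∧ (x : ℝ) ≤ u + L) : (#s : ℝ) ≤ L + 1 := by
  rcases s.eq_empty_or_nonempty with rfl | hne
  · simpa using hL.trans (le_add_of_nonneg_right zero_le_one)
  have hmin := hs _ (s.min'_mem hne)
  have hmax := hs _ (s.max'_mem hne)
  calc (#s : ℝ) ≤ #(Icc (s.min' hne) (s.max' hne)) := by
        exact_mod_cast card_le_card fun x hx => mem_Icc.2 ⟨s.min'_le x hx, s.le_max' x hx⟩
    _ = ((s.max' hne + 1 - s.min' hne : ℤ) : ℝ) := by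
        rw [Int.card_Icc, ← Int.cast_natCast,
          Int.toNat_of_nonneg (by linarith [s.min'_le_max' hne])]
    _ ≤ L + 1 := by push_cast; linarith

lemma Int.card_le_of_modEq {s : Finset ℤ} {m : ℤ} (hm : m ≠ 0) {X : ℝ} (hX : 0 ≤ X)
    (hs : ∀ x ∈ s, |(x : ℝ)| ≤ X) (hmod : ∀ x ∈ s, ∀ y ∈ s, x ≡ y [ZMOD m]) :
    (#s : ℝ) ≤ 2 * X / |(m : ℝ)| + 1 := by
  rcases s.eq_empty_or_nonempty with rfl | ⟨r, hr⟩
  · simp only [card_empty, Nat.cast_zero]; positivity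
  have hg : (0 : ℝ) < |(m : ℝ)| := by positivity
  have hk : ∀ x ∈ s, |m| * ((x - r) / |m|) = x - r := fun x hx =>
    Int.mul_ediv_cancel' ((abs_dvd m _).2 (hmod r hr x hx).dvd)
  have hinj : Set.InjOn (fun x => (x - r) / |m|) s := fun x hx y hy hxy =>
    by simpa using (hk x hx).symm.trans ((congrArg (|m| * ·) hxy).trans (hk y hy))
  rw [← card_image_of_injOn hinj]
  refine Int.card_le_of_forall_mem_Icc (u := (-X - r) / |(m : ℝ)|) (by positivity) ?_
  simp only [mem_image]
  rintro _ ⟨x, hx, rfl⟩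
  have hkx : (|(m : ℝ)|) * (((x - r) / |m| : ℤ) : ℝ) = x - r := by exact_mod_cast hk x hx
  have hx := abs_le.1 (hs x hx)
  constructor
  · rw [div_le_iff₀' hg]; linarith
  · calc _ ≤ (X - r) / |(m : ℝ)| := by rw [le_div_iff₀' hg]; linarith
      _ = _ := by ring

lemma Finset.card_le_mul_of_card_image_le_of_card_fiber_le {α β : Type*} [DecidableEq β]
    (s : Finset α) (f : α → β) {B F : ℝ} (hF : 0 ≤ F) (hB : (#(s.image f) : ℝ) ≤ B)
    (hfib : ∀ b ∈ s.image f, (#{x ∈ s | f x = b} : ℝ) ≤ F) : (#s : ℝ) ≤ B * F :=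
  calc (#s : ℝ) = ∑ b ∈ s.image f, (#{x ∈ s | f x = b} : ℝ) := by
        exact_mod_cast card_eq_sum_card_image f s
    _ ≤ #(s.image f) * F := by simpa using sum_le_sum hfib
    _ ≤ B * F := by gcongr

lemma card_le_of_mul_modEq_one {s : Finset ℤ} {a c : ℤ} (hc : c ≠ 0) {X : ℝ} (hX : 0 ≤ X)
    (hs : ∀ d ∈ s, |(d : ℝ)| ≤ X ∧ a * d ≡ 1 [ZMOD c]) : (#s : ℝ) ≤ 2 * X / |(c : ℝ)| + 1 :=
  Int.card_le_of_modEq hc hX (fun d hd => (hs d hd).1) fun d hd d' hd' =>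
    calc d = d * 1 := (mul_one d).symm
      _ ≡ d * (a * d') [ZMOD c] := (hs d' hd').2.symm.mul_left d
      _ = a * d * d' := by ring
      _ ≡ 1 * d' [ZMOD c] := (hs d hd).2.mul_right d'
      _ = d' := one_mul d'

lemma card_close_fractions_le_of_abs_le {s : Finset (ℤ × ℤ)} {c₁ c₂ : ℤ} (hc₁ : c₁ ≠ 0)
    (hc : |c₂| ≤ |c₁|) {X : ℝ} (hX : 0 ≤ X)
    (hs : ∀ p ∈ s, |(p.1 : ℝ)| ≤ X ∧ |p.1 * c₂ - p.2 * c₁| ≤ |c₁| + |c₂|) :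
    (#s : ℝ) ≤ 5 * (2 * X + 1) := by
  rw [mul_comm]
  refine s.card_le_mul_of_card_image_le_of_card_fiber_le Prod.fst (by norm_num) ?_ ?_
  · refine Int.card_le_of_forall_mem_Icc (u := -X) (by positivity) ?_
    simp only [mem_image]
    rintro _ ⟨p, hp, rfl⟩
    have := abs_le.1 (hs p hp).1
    constructor <;> linarith
  · intro a₁ _
    -- for fixed `a₁`, the integers `a₁ c₂ - a₂ c₁` lie in one class mod `c₁`
    have hinj : Set.InjOn (fun p : ℤ × ℤ => p.1 * c₂ - p.2 * c₁)
        (({p ∈ s | p.1 = a₁} : Finset _) : Set _) := by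
      rintro ⟨x₁, x₂⟩ hx ⟨y₁, y₂⟩ hy hxy
      simp only [coe_filter, Set.mem_ofPred_eq] at hx hy hxy
      obtain rfl := hx.2.trans hy.2.symm
      simpa using mul_right_cancel₀ hc₁ (by linarith : x₂ * c₁ = y₂ * c₁)
    rw [← card_image_of_injOn hinj]
    have hc₁R : (0 : ℝ) < |(c₁ : ℝ)| := by positivity
    have hcR : |(c₂ : ℝ)| ≤ |(c₁ : ℝ)| := by exact_mod_cast hc
    refine (Int.card_le_of_modEq hc₁ (X := |(c₁ : ℝ)| + |(c₂ : ℝ)|) (by positivity) ?_ ?_).trans ?_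
    · simp only [mem_image, mem_filter]
      rintro _ ⟨p, ⟨hp, -⟩, rfl⟩
      exact_mod_cast (hs p hp).2
    · simp only [mem_image, mem_filter]
      rintro _ ⟨p, ⟨-, hp⟩, rfl⟩ _ ⟨q, ⟨-, hq⟩, rfl⟩
      exact Int.modEq_iff_dvd.2 ⟨p.2 - q.2, by rw [hp, hq]; ring⟩
    · rw [div_add_one hc₁R.ne', div_le_iff₀ hc₁R]
      linarith

lemma card_close_fractions_le {s : Finset (ℤ × ℤ)} {c₁ c₂ : ℤ} (hc₁ : c₁ ≠ 0) (hc₂ : c₂ ≠ 0)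
    {X : ℝ} (hX : 0 ≤ X)
    (hs : ∀ p ∈ s, |(p.1 : ℝ)| ≤ X ∧ |(p.2 : ℝ)| ≤ X ∧ |p.1 * c₂ - p.2 * c₁| ≤ |c₁| + |c₂|) :
    (#s : ℝ) ≤ 5 * (2 * X + 1) := by
  rcases le_total |c₂| |c₁| with hc | hc
  · exact card_close_fractions_le_of_abs_le hc₁ hc hX fun p hp => ⟨(hs p hp).1, (hs p hp).2.2⟩
  rw [← card_image_of_injective s Prod.swap_injective]
  refine card_close_fractions_le_of_abs_le hc₂ hc hX ?_
  simp only [mem_image]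
  rintro _ ⟨p, hp, rfl⟩
  obtain ⟨-, hp₂, hclose⟩ := hs p hp
  refine ⟨hp₂, ?_⟩
  rwa [Prod.fst_swap, Prod.snd_swap, abs_sub_comm, add_comm]

lemma card_le_of_close_fractions_of_mul_modEq_one {U : Finset ((ℤ × ℤ) × (ℤ × ℤ))} {c₁ c₂ : ℤ}
    (hc₁ : c₁ ≠ 0) (hc₂ : c₂ ≠ 0) {X : ℝ} (hX : 0 ≤ X)
    (hU : ∀ a₁ a₂ d₁ d₂, ((a₁, a₂), (d₁, d₂)) ∈ U →
      |(a₁ : ℝ)| ≤ X ∧ |(a₂ : ℝ)| ≤ X ∧ |(d₁ : ℝ)| ≤ X ∧ |(d₂ : ℝ)| ≤ X ∧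
      a₁ * d₁ ≡ 1 [ZMOD c₁] ∧ a₂ * d₂ ≡ 1 [ZMOD c₂] ∧ |a₁ * c₂ - a₂ * c₁| ≤ |c₁| + |c₂|) :
    (#U : ℝ) ≤ 5 * (2 * X + 1) * ((2 * X / |(c₁ : ℝ)| + 1) * (2 * X / |(c₂ : ℝ)| + 1)) := by
  refine U.card_le_mul_of_card_image_le_of_card_fiber_le Prod.fst (by positivity) ?_ ?_
  · refine card_close_fractions_le hc₁ hc₂ hX ?_
    simp only [mem_image]
    rintro _ ⟨⟨⟨a₁, a₂⟩, d₁, d₂⟩, hu, rfl⟩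
    obtain ⟨ha₁, ha₂, -, -, -, -, hclose⟩ := hU _ _ _ _ hu
    exact ⟨ha₁, ha₂, hclose⟩
  · rintro ⟨a₁, a₂⟩ -
    set F := {u ∈ U | u.1 = (a₁, a₂)}
    have hF : ∀ u ∈ F, u.1 = (a₁, a₂) ∧ |(u.2.1 : ℝ)| ≤ X ∧ |(u.2.2 : ℝ)| ≤ X ∧
        a₁ * u.2.1 ≡ 1 [ZMOD c₁] ∧ a₂ * u.2.2 ≡ 1 [ZMOD c₂] := by
      rintro ⟨⟨b₁, b₂⟩, d₁, d₂⟩ hu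
      obtain ⟨huU, hb⟩ := mem_filter.1 hu
      simp only [Prod.mk.injEq] at hb
      obtain ⟨rfl, rfl⟩ := hb
      obtain ⟨-, -, hd₁, hd₂, h₁, h₂, -⟩ := hU _ _ _ _ huU
      exact ⟨rfl, hd₁, hd₂, h₁, h₂⟩
    have hinj : Set.InjOn Prod.snd (F : Set _) := fun u hu v hv huv =>
      Prod.ext ((hF u hu).1.trans (hF v hv).1.symm) huv
    rw [← card_image_of_injOn hinj]
    calc (#(F.image Prod.snd) : ℝ) ≤ #((F.image (·.2.1)) ×ˢ (F.image (·.2.2))) := by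
          refine Nat.cast_le.2 (card_le_card ?_)
          simp only [subset_iff, mem_image, mem_product]
          rintro _ ⟨u, hu, rfl⟩
          exact ⟨⟨u, hu, rfl⟩, u, hu, rfl⟩
      _ ≤ _ := by
          rw [card_product, Nat.cast_mul]
          gcongr
          · refine card_le_of_mul_modEq_one hc₁ hX (a := a₁) ?_
            simp only [mem_image]
            rintro _ ⟨u, hu, rfl⟩
            exact ⟨(hF u hu).2.1, (hF u hu).2.2.2.1⟩
          · refine card_le_of_mul_modEq_one hc₂ hX (a := a₂) ?_
            simp only [mem_image]
            rintro _ ⟨u, hu, rfl⟩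
            exact ⟨(hF u hu).2.2.1, (hF u hu).2.2.2.2⟩

lemma abs_div_sub_div_le_iff {a₁ a₂ c₁ c₂ : ℝ} (hc₁ : c₁ ≠ 0) (hc₂ : c₂ ≠ 0) :
    |a₁ / c₁ - a₂ / c₂| ≤ 1 / |c₁| + 1 / |c₂| ↔ |a₁ * c₂ - a₂ * c₁| ≤ |c₁| + |c₂| := by
  rw [div_sub_div _ _ hc₁ hc₂, abs_div, div_add_div _ _ (abs_ne_zero.2 hc₁) (abs_ne_zero.2 hc₂),
    ← abs_mul, div_le_div_iff_of_pos_right (by positivity), one_mul, mul_one, add_comm,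
    mul_comm c₁]

def IsCloseSL2Pair (X : ℝ) : (ℤ × ℤ × ℤ × ℤ) × (ℤ × ℤ × ℤ × ℤ) → Prop
  | ((a₁, b₁, c₁, d₁), (a₂, b₂, c₂, d₂)) =>
    a₁ * d₁ - b₁ * c₁ = 1 ∧ a₂ * d₂ - b₂ * c₂ = 1 ∧
    |(a₁ : ℝ)| ≤ X ∧ |(c₁ : ℝ)| ≤ X ∧ |(d₁ : ℝ)| ≤ X ∧
    |(a₂ : ℝ)| ≤ X ∧ |(c₂ : ℝ)| ≤ X ∧ |(d₂ : ℝ)| ≤ X ∧ c₁ ≠ 0 ∧ c₂ ≠ 0 ∧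
    |(a₁ : ℝ) / c₁ - a₂ / c₂| ≤ 1 / |(c₁ : ℝ)| + 1 / |(c₂ : ℝ)|

lemma Int.mul_modEq_one_of_mul_sub_mul_eq_one {a b c d : ℤ} (h : a * d - b * c = 1) :
    a * d ≡ 1 [ZMOD c] :=
  Int.modEq_iff_dvd.2 ⟨-b, by linear_combination -h⟩

lemma two_mul_div_add_one_le {c X : ℝ} (hc : 0 < c) (hcX : c ≤ X) :
    2 * X / c + 1 ≤ 3 * X / c := by
  rw [div_add_one hc.ne', div_le_div_iff_of_pos_right hc]; linarith

lemma card_le_of_lower_left_eq {t : Finset ((ℤ × ℤ × ℤ × ℤ) × (ℤ × ℤ × ℤ × ℤ))} {c₁ c₂ : ℤ}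
    {X : ℝ} (hX : 1 ≤ X) (ht : ∀ q ∈ t, IsCloseSL2Pair X q ∧ q.1.2.2.1 = c₁ ∧ q.2.2.2.1 = c₂) :
    (#t : ℝ) ≤ 135 * X ^ 3 / (|(c₁ : ℝ)| * |(c₂ : ℝ)|) := by
  rcases t.eq_empty_or_nonempty with rfl | ⟨⟨⟨_, _, c₁', _⟩, _, _, c₂', _⟩, hq₀⟩
  · simp only [card_empty, Nat.cast_zero]; positivity
  obtain ⟨⟨-, -, -, hc₁X, -, -, hc₂X, -, hc₁, hc₂, -⟩, h₁, h₂⟩ := ht _ hq₀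
  simp only at h₁ h₂
  subst c₁' c₂'
  -- the upper-right entry `b = (a d - 1) / c` is determined by the others
  have hinj : Set.InjOn (fun q : (ℤ × ℤ × ℤ × ℤ) × (ℤ × ℤ × ℤ × ℤ) =>
      ((q.1.1, q.2.1), (q.1.2.2.2, q.2.2.2.2))) (t : Set _) := by
    rintro ⟨⟨a₁, b₁, e₁, d₁⟩, a₂, b₂, e₂, d₂⟩ hq ⟨⟨a₁', b₁', e₁', d₁'⟩, a₂', b₂', e₂', d₂'⟩ hq' h
    simp only [Prod.mk.injEq] at h
    obtain ⟨⟨rfl, rfl⟩, rfl, rfl⟩ := h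
    obtain ⟨⟨h₁, h₂, -⟩, he₁, he₂⟩ := ht _ hq
    obtain ⟨⟨h₁', h₂', -⟩, he₁', he₂'⟩ := ht _ hq'
    simp only at he₁ he₂ he₁' he₂'
    subst e₁ e₂ e₁' e₂'
    obtain rfl : b₁ = b₁' := mul_right_cancel₀ hc₁ (by linarith)
    obtain rfl : b₂ = b₂' := mul_right_cancel₀ hc₂ (by linarith)
    rfl
  rw [← card_image_of_injOn hinj]
  refine (card_le_of_close_fractions_of_mul_modEq_one hc₁ hc₂ (zero_le_one.trans hX) ?_).trans ?_
  · simp only [mem_image, Prod.mk.injEq]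
    rintro a₁ a₂ d₁ d₂ ⟨⟨⟨a₁, b₁, e₁, d₁⟩, a₂, b₂, e₂, d₂⟩, hq, ⟨rfl, rfl⟩, rfl, rfl⟩
    obtain ⟨⟨h₁, h₂, ha₁, -, hd₁, ha₂, -, hd₂, -, -, hclose⟩, he₁, he₂⟩ := ht _ hq
    simp only at he₁ he₂
    subst e₁ e₂
    rw [abs_div_sub_div_le_iff (by exact_mod_cast hc₁) (by exact_mod_cast hc₂)] at hclose
    exact ⟨ha₁, ha₂, hd₁, hd₂, Int.mul_modEq_one_of_mul_sub_mul_eq_one h₁,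
      Int.mul_modEq_one_of_mul_sub_mul_eq_one h₂, by exact_mod_cast hclose⟩
  · have hc₁R : (0 : ℝ) < |(c₁ : ℝ)| := by positivity
    have hc₂R : (0 : ℝ) < |(c₂ : ℝ)| := by positivity
    calc _ ≤ 5 * (3 * X) * ((3 * X / |(c₁ : ℝ)|) * (3 * X / |(c₂ : ℝ)|)) := by
          gcongr
          · linarith
          · exact two_mul_div_add_one_le hc₁R hc₁X
          · exact two_mul_div_add_one_le hc₂R hc₂X
      _ = _ := by field_simp; ring

def nonzeroMultiples (Q : ℤ) (n : ℕ) : Finset ℤ :=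
  (Icc 1 n).image (fun u : ℕ => Q * u) ∪ (Icc 1 n).image (fun u : ℕ => -Q * u)

lemma mem_nonzeroMultiples {Q c : ℤ} (hQ : 0 < Q) (hc : c ≠ 0) (hQc : Q ∣ c) {X : ℝ}
    (hcX : |(c : ℝ)| ≤ X) : c ∈ nonzeroMultiples Q ⌊X / Q⌋₊ := by
  obtain ⟨k, rfl⟩ := hQc
  have hQR : (0 : ℝ) < Q := by exact_mod_cast hQ
  have hk : |(k : ℝ)| ≤ X / Q := by
    rw [le_div_iff₀' hQR]; simpa [abs_mul, abs_of_pos hQR] using hcX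
  have hk₀ : k ≠ 0 := right_ne_zero_of_mul hc
  simp only [nonzeroMultiples, mem_union, mem_image, mem_Icc]
  rcases hk₀.lt_or_gt with hneg | hpos
  · refine Or.inr ⟨(-k).toNat, ⟨by omega, Nat.le_floor ?_⟩,
      by rw [Int.toNat_of_nonneg (by omega)]; ring⟩
    rw [abs_of_neg (by exact_mod_cast hneg)] at hk
    rwa [← Int.cast_natCast, Int.toNat_of_nonneg (by omega), Int.cast_neg]
  · refine Or.inl ⟨k.toNat, ⟨by omega, Nat.le_floor ?_⟩, by rw [Int.toNat_of_nonneg hpos.le]⟩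
    rw [abs_of_pos (by exact_mod_cast hpos)] at hk
    rwa [← Int.cast_natCast, Int.toNat_of_nonneg hpos.le]

lemma sum_inv_abs_nonzeroMultiples_le {Q : ℤ} (hQ : 0 < Q) (n : ℕ) :
    ∑ c ∈ nonzeroMultiples Q n, 1 / |(c : ℝ)| ≤ 2 * harmonic n / Q := by
  have hQR : (0 : ℝ) < Q := by exact_mod_cast hQ
  have hhalf : ∀ e : ℤ, |e| = Q →
      ∑ c ∈ (Icc 1 n).image (fun u : ℕ => e * u), 1 / |(c : ℝ)| = harmonic n / Q := by
    intro e he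
    have he₀ : e ≠ 0 := by rintro rfl; simp at he; omega
    rw [sum_image fun u _ v _ huv => by exact_mod_cast mul_left_cancel₀ he₀ huv,
      harmonic_eq_sum_Icc, Rat.cast_sum, sum_div]
    refine sum_congr rfl fun u _ => ?_
    rw [Int.cast_mul, abs_mul, ← Int.cast_abs, he, Int.cast_natCast, Nat.abs_cast]
    push_cast; ring
  rw [nonzeroMultiples]
  set A := (Icc 1 n).image (fun u : ℕ => Q * u)
  set B := (Icc 1 n).image (fun u : ℕ => -Q * u)
  calc ∑ c ∈ A ∪ B, 1 / |(c : ℝ)| ≤ ∑ c ∈ A ∪ B, 1 / |(c : ℝ)| + ∑ c ∈ A ∩ B, 1 / |(c : ℝ)| :=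
        le_add_of_nonneg_right (sum_nonneg fun _ _ => by positivity)
    _ = harmonic n / Q + harmonic n / Q := by
        rw [sum_union_inter, hhalf Q (abs_of_pos hQ), hhalf (-Q) (by rw [abs_neg, abs_of_pos hQ])]
    _ = 2 * harmonic n / Q := by ring

lemma sum_inv_abs_nonzeroMultiples_floor_le {Q : ℤ} (hQ : 1 ≤ Q) {X : ℝ} (hX : 1 ≤ X) :
    ∑ c ∈ nonzeroMultiples Q ⌊X / Q⌋₊, 1 / |(c : ℝ)| ≤ 2 * (1 + log X) / Q := by
  have hQR : (1 : ℝ) ≤ Q := by exact_mod_cast hQ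
  refine (sum_inv_abs_nonzeroMultiples_le hQ ⌊X / Q⌋₊).trans ?_
  gcongr
  refine (harmonic_le_one_add_log _).trans (add_le_add le_rfl ?_)
  rcases (Nat.floor (X / Q)).eq_zero_or_pos with h | h
  · rw [h, Nat.cast_zero, log_zero]; exact log_nonneg hX
  · refine log_le_log (by exact_mod_cast h) ((Nat.floor_le (by positivity)).trans ?_)
    exact div_le_self (zero_le_one.trans hX) hQR

lemma one_add_log_sq_le {ε X : ℝ} (hε : 0 < ε) (hX : 1 ≤ X) :
    (1 + log X) ^ 2 ≤ (1 + 2 / ε) ^ 2 * X ^ ε := by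
  have h₁ : 1 ≤ X ^ (ε / 2) := one_le_rpow hX (by positivity)
  have h₂ : log X ≤ 2 / ε * X ^ (ε / 2) :=
    (log_le_rpow_div (zero_le_one.trans hX) (half_pos hε)).trans_eq (by ring)
  calc (1 + log X) ^ 2 ≤ ((1 + 2 / ε) * X ^ (ε / 2)) ^ 2 := by
        gcongr
        · linarith [log_nonneg hX]
        · linarith
    _ = (1 + 2 / ε) ^ 2 * X ^ ε := by
        rw [mul_pow, ← rpow_mul_natCast (zero_le_one.trans hX)]; norm_num

theorem ncard_le_of_isCloseSL2Pair {S : Set ((ℤ × ℤ × ℤ × ℤ) × (ℤ × ℤ × ℤ × ℤ))} {Q : ℤ}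
    (hQ : 1 ≤ Q) {X : ℝ} (hX : 1 ≤ X)
    (hS : ∀ q ∈ S, IsCloseSL2Pair X q ∧ Q ∣ q.1.2.2.1 ∧ Q ∣ q.2.2.2.1) :
    (S.ncard : ℝ) ≤ 540 * X ^ 3 * (1 + log X) ^ 2 / Q ^ 2 := by
  rcases S.finite_or_infinite with hfin | hinf
  swap
  · rw [hinf.ncard, Nat.cast_zero]; positivity
  classical
  set D := nonzeroMultiples Q ⌊X / Q⌋₊
  set s := hfin.toFinset
  have hmaps : ∀ q ∈ s, (q.1.2.2.1, q.2.2.2.1) ∈ D ×ˢ D := by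
    rintro ⟨⟨_, _, c₁, _⟩, _, _, c₂, _⟩ hq
    obtain ⟨⟨-, -, -, hc₁X, -, -, hc₂X, -, hc₁, hc₂, -⟩, hQ₁, hQ₂⟩ := hS _ (hfin.mem_toFinset.1 hq)
    exact mem_product.2 ⟨mem_nonzeroMultiples hQ hc₁ hQ₁ hc₁X, mem_nonzeroMultiples hQ hc₂ hQ₂ hc₂X⟩
  have hfiber : ∀ p ∈ D ×ˢ D, (#{q ∈ s | (q.1.2.2.1, q.2.2.2.1) = p} : ℝ) ≤
      135 * X ^ 3 * ((1 / |(p.1 : ℝ)|) * (1 / |(p.2 : ℝ)|)) := by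
    rintro ⟨c₁, c₂⟩ -
    refine (card_le_of_lower_left_eq (c₁ := c₁) (c₂ := c₂) hX fun q hq => ?_).trans_eq (by ring)
    obtain ⟨hqs, hq⟩ := mem_filter.1 hq
    exact ⟨(hS q (hfin.mem_toFinset.1 hqs)).1, Prod.mk.inj hq⟩
  have hD := sum_inv_abs_nonzeroMultiples_floor_le hQ hX
  calc (S.ncard : ℝ) = #s := by rw [Set.ncard_eq_toFinset_card S hfin]
    _ = ∑ p ∈ D ×ˢ D, (#{q ∈ s | (q.1.2.2.1, q.2.2.2.1) = p} : ℝ) := by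
        exact_mod_cast card_eq_sum_card_fiberwise hmaps
    _ ≤ 135 * X ^ 3 * ((∑ c ∈ D, 1 / |(c : ℝ)|) * ∑ c ∈ D, 1 / |(c : ℝ)|) := by
        rw [sum_mul_sum, ← sum_product', mul_sum]; exact sum_le_sum hfiber
    _ ≤ 135 * X ^ 3 * ((2 * (1 + log X) / Q) * (2 * (1 + log X) / Q)) := by
        have hD₀ : 0 ≤ ∑ c ∈ D, 1 / |(c : ℝ)| := sum_nonneg fun _ _ => by positivity
        gcongr
        exact hD₀.trans hD
    _ = 540 * X ^ 3 * (1 + log X) ^ 2 / Q ^ 2 := by ring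

/-- for every `ε > 0` there is `C(ε)` such that for `1 ≤ Q ≤ Y ≤ X`, the
number of pairs `(A₁, A₂) ∈ SL₂(ℤ)²` of height at most `X` with `c₁, c₂` nonzero,
divisible by `Q`, `Y/2 < min(|c₁|,|c₂|) ≤ Y` and `|a₁/c₁ - a₂/c₂| ≤ 1/|c₁| + 1/|c₂|`,
is at most `C(ε) · X^{3+ε} / Q²`. -/
theorem stmt6 (ε : ℝ) (hε : 0 < ε) :
    ∃ C : ℝ, 0 < C ∧ ∀ (Q : ℤ) (Y X : ℝ), 1 ≤ Q → (Q : ℝ) ≤ Y → Y ≤ X →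
      ({q : (ℤ × ℤ × ℤ × ℤ) × (ℤ × ℤ × ℤ × ℤ) |
          let a₁ := q.1.1; let b₁ := q.1.2.1; let c₁ := q.1.2.2.1; let d₁ := q.1.2.2.2
          let a₂ := q.2.1; let b₂ := q.2.2.1; let c₂ := q.2.2.2.1; let d₂ := q.2.2.2.2
          a₁ * d₁ - b₁ * c₁ = 1 ∧ a₂ * d₂ - b₂ * c₂ = 1 ∧
          (|a₁| : ℝ) ≤ X ∧ (|b₁| : ℝ) ≤ X ∧ (|c₁| : ℝ) ≤ X ∧ (|d₁| : ℝ) ≤ X ∧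
          (|a₂| : ℝ) ≤ X ∧ (|b₂| : ℝ) ≤ X ∧ (|c₂| : ℝ) ≤ X ∧ (|d₂| : ℝ) ≤ X ∧
          c₁ ≠ 0 ∧ c₂ ≠ 0 ∧ Q ∣ c₁ ∧ Q ∣ c₂ ∧
          Y / 2 < (min |c₁| |c₂| : ℝ) ∧ (min |c₁| |c₂| : ℝ) ≤ Y ∧
          |(a₁ : ℝ) / (c₁ : ℝ) - (a₂ : ℝ) / (c₂ : ℝ)| ≤ 1 / (|c₁| : ℝ) + 1 / (|c₂| : ℝ)
          }.ncard : ℝ)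
        ≤ C * X ^ (3 + ε) / (Q : ℝ) ^ 2 := by
  refine ⟨540 * (1 + 2 / ε) ^ 2, by positivity, fun Q Y X hQ hQY hYX => ?_⟩
  have hX : (1 : ℝ) ≤ X := le_trans (by exact_mod_cast hQ) (hQY.trans hYX)
  refine (ncard_le_of_isCloseSL2Pair hQ hX ?_).trans ?_
  · rintro ⟨⟨a₁, b₁, c₁, d₁⟩, a₂, b₂, c₂, d₂⟩
      ⟨h₁, h₂, ha₁, -, hc₁, hd₁, ha₂, -, hc₂, hd₂, hc₁₀, hc₂₀, hQ₁, hQ₂, -, -, hclose⟩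
    exact ⟨⟨h₁, h₂, ha₁, hc₁, hd₁, ha₂, hc₂, hd₂, hc₁₀, hc₂₀, hclose⟩, hQ₁, hQ₂⟩
  calc 540 * X ^ 3 * (1 + log X) ^ 2 / Q ^ 2 ≤ 540 * X ^ 3 * ((1 + 2 / ε) ^ 2 * X ^ ε) / Q ^ 2 := by
        gcongr; exact one_add_log_sq_le hε hX
    _ = 540 * (1 + 2 / ε) ^ 2 * X ^ (3 + ε) / Q ^ 2 := by
        rw [rpow_add (zero_lt_one.trans_le hX), rpow_ofNat]; ring
end

section
/- There is a constant c > 0 such that for all sufficiently large X, the number of matrices A ∈ SL₂(ℤ) with height at most X satisfying A³ = I is at least cX. Consequently, for each s ≥ 1 the number of s-tuples (A₁,...,A_s) ∈ SL₂(ℤ)^s of matrices of height at most X that do not freely generate a free group is at least c' X^{2s-1} for some constant c' > 0. -/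
/-!
An element of order three of height at most `4 Y²` is obtained by conjugating the companion matrix
`ρ` of `X² + X + 1` by any `g ∈ SL₂(ℤ)` of height at most `Y`. The centraliser of `ρ` is the unit
group of `ℤ[ρ] ≅ ℤ[ω]`, of order six, and no nontrivial element of it keeps the first row of `g`
positive; so conjugation is injective on matrices with positive first row. Every coprime pair
`(x, y) ∈ [1, Y]²` is the first row of such a `g` of height at most `Y`, and at least a quarter of
all pairs are coprime because `∑_{d ≥ 2} 1 / d² < 3 / 4`. This gives `≫ X` elements of order three
and `≫ X²` elements of height at most `X`; a tuple whose first entry has order three is not free.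
-/

/-- A tuple `(A₁, …, A_s)` is non-free: some nonempty reduced word in the `A_i^{±1}`
equals the identity. -/
def IsNonFreeTuple {s : ℕ} (A : Fin s → Matrix.SpecialLinearGroup (Fin 2) ℤ) : Prop :=
  ∃ (m : ℕ), 1 ≤ m ∧ ∃ (ν : ℕ → Fin s) (e : ℕ → ℤ),
    (∀ i < m, e i = 1 ∨ e i = -1) ∧
    (∀ i, i + 1 < m → ¬(ν (i + 1) = ν i ∧ e (i + 1) = -e i)) ∧
    ((List.range m).map (fun i => A (ν i) ^ e i)).prod = 1

open Finset Matrix Real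
open scoped MatrixGroups

theorem Set.ncard_univ_pi {ι : Type*} [Fintype ι] {α : ι → Type*} (s : ∀ i, Set (α i)) :
    (Set.univ.pi s).ncard = ∏ i, (s i).ncard := by
  simp only [Set.ncard_def, Set.encard_pi_eq_prod_encard, ENat.toNat_prod]

lemma sum_Icc_two_one_div_sq_le (n : ℕ) : ∑ d ∈ Icc 2 n, 1 / (d : ℝ) ^ 2 ≤ 3 / 4 := by
  have hzeta : ∑ d ∈ insert 1 (Icc 2 n), 1 / (d : ℝ) ^ 2 ≤ π ^ 2 / 6 :=
    sum_le_hasSum _ (fun _ _ => by positivity) hasSum_zeta_two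
  rw [sum_insert (by simp)] at hzeta
  nlinarith [pi_lt_d2, pi_pos]

lemma card_coprime_pairs_ge (n : ℕ) :
    (n : ℝ) ^ 2 / 4 ≤ #{p ∈ Ioc 0 n ×ˢ Ioc 0 n | p.1.Coprime p.2} := by
  set B := Ioc 0 n ×ˢ Ioc 0 n
  have hsplit := card_filter_add_card_filter_not (s := B) (fun p => p.1.Coprime p.2)
  have hB : #B = n ^ 2 := by simp [B, sq]
  have hcover : {p ∈ B | ¬ p.1.Coprime p.2} ⊆
      (Icc 2 n).biUnion fun d => {x ∈ Ioc 0 n | d ∣ x} ×ˢ {x ∈ Ioc 0 n | d ∣ x} := by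
    intro p hp
    simp only [B, mem_filter, mem_product, mem_Ioc] at hp
    obtain ⟨⟨⟨h1, h1n⟩, h2, h2n⟩, hnc⟩ := hp
    have hg : 2 ≤ p.1.gcd p.2 := by
      have := Nat.gcd_pos_of_pos_left p.2 h1
      unfold Nat.Coprime at hnc; omega
    simp only [mem_biUnion, mem_Icc, mem_product, mem_filter, mem_Ioc]
    exact ⟨_, ⟨hg, (Nat.gcd_le_left _ h1).trans h1n⟩, ⟨⟨h1, h1n⟩, Nat.gcd_dvd_left _ _⟩,
      ⟨h2, h2n⟩, Nat.gcd_dvd_right _ _⟩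
  have hbad : (#{p ∈ B | ¬ p.1.Coprime p.2} : ℝ) ≤ 3 / 4 * n ^ 2 := calc
    _ ≤ ∑ d ∈ Icc 2 n, ((n / d : ℕ) : ℝ) ^ 2 := by
      have := (card_le_card hcover).trans card_biUnion_le
      simp only [card_product, Nat.Ioc_filter_dvd_card_eq_div, ← sq] at this
      exact_mod_cast this
    _ ≤ ∑ d ∈ Icc 2 n, (n : ℝ) ^ 2 * (1 / (d : ℝ) ^ 2) := by
      gcongr with d
      rw [← div_eq_mul_one_div, ← div_pow]
      gcongr
      exact Nat.cast_div_le
    _ ≤ 3 / 4 * n ^ 2 := by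
      rw [← mul_sum, mul_comm]
      gcongr
      exact sum_Icc_two_one_div_sq_le n
  have : (#B : ℝ) = #{p ∈ B | p.1.Coprime p.2} + #{p ∈ B | ¬ p.1.Coprime p.2} := by
    exact_mod_cast hsplit.symm
  rw [hB] at this
  push_cast at this
  linarith

def IsHeightLE {m n : Type*} (X : ℝ) (A : Matrix m n ℤ) : Prop := ∀ i j, (|A i j| : ℝ) ≤ X

namespace IsHeightLE

variable {m n o : Type*}

lemma mul [Fintype n] {a b : ℝ} {A : Matrix m n ℤ} {B : Matrix n o ℤ}
    (hA : IsHeightLE a A) (hB : IsHeightLE b B) :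
    IsHeightLE (Fintype.card n * a * b) (A * B) := fun i k => calc
  (|(A * B) i k| : ℝ) ≤ ∑ j, |(A i j : ℝ)| * |(B j k : ℝ)| := by
    simpa [mul_apply, abs_mul] using abs_sum_le_sum_abs (fun j => (A i j : ℝ) * B j k) univ
  _ ≤ ∑ _j : n, a * b := sum_le_sum fun j _ =>
    mul_le_mul (hA i j) (hB j k) (abs_nonneg _) ((abs_nonneg _).trans (hA i j))
  _ = Fintype.card n * a * b := by simp [mul_assoc]

lemma finite [Finite m] [Finite n] (X : ℝ) : {A : Matrix m n ℤ | IsHeightLE X A}.Finite := by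
  refine (Set.Finite.pi fun _ => Set.Finite.pi fun _ => Set.finite_Icc (-⌈X⌉) ⌈X⌉).subset ?_
  intro A hA i _ j _
  have h := (hA i j).trans (Int.le_ceil X)
  rw [← Int.cast_abs, Int.cast_le] at h
  exact abs_le.mp h

lemma finite_SL [Fintype n] [DecidableEq n] (X : ℝ) :
    {g : SpecialLinearGroup n ℤ | IsHeightLE X (g : Matrix n n ℤ)}.Finite :=
  (IsHeightLE.finite X).preimage Subtype.val_injective.injOn

lemma inv {X : ℝ} {g : SL(2, ℤ)} (hg : IsHeightLE X (g : Matrix (Fin 2) (Fin 2) ℤ)) :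
    IsHeightLE X ((g⁻¹ : SL(2, ℤ)) : Matrix (Fin 2) (Fin 2) ℤ) := by
  simp only [Matrix.SpecialLinearGroup.coe_inv, adjugate_fin_two]
  intro i j
  fin_cases i <;> fin_cases j <;> simpa using hg _ _

lemma conj {Y : ℝ} {g T : SL(2, ℤ)} (hg : IsHeightLE Y (g : Matrix (Fin 2) (Fin 2) ℤ))
    (hT : IsHeightLE 1 (T : Matrix (Fin 2) (Fin 2) ℤ)) :
    IsHeightLE (4 * Y ^ 2) ((g * T * g⁻¹ : SL(2, ℤ)) : Matrix (Fin 2) (Fin 2) ℤ) := by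
  have := (hg.mul hT).mul hg.inv
  simp only [Fintype.card_fin, Nat.cast_ofNat] at this
  simp only [Matrix.SpecialLinearGroup.coe_mul]
  convert this using 1
  ring

end IsHeightLE

lemma Matrix.SpecialLinearGroup.exists_row_zero_eq_of_coprime {x y : ℕ} (hx : 0 < x) (hy : 0 < y)
    (hxy : x.Coprime y) :
    ∃ g : SL(2, ℤ), g 0 0 = x ∧ g 0 1 = y ∧ IsHeightLE (max x y) (g : Matrix (Fin 2) (Fin 2) ℤ) := by
  obtain ⟨u, v, huv⟩ := Nat.isCoprime_iff_coprime.mpr hxy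
  -- reduce the Bézout coefficient `u` mod `y`, so that `0 ≤ d < y` and then `-1 ≤ c < x`
  set d := u % y
  set c := -(v + x * (u / y))
  have hdet : x * d - y * c = 1 := by
    have := Int.emod_add_mul_ediv u y
    simp only [d, c]; linear_combination huv + x * this
  have hy' : (0 : ℤ) < y := by exact_mod_cast hy
  have hd0 : 0 ≤ d := Int.emod_nonneg _ hy'.ne'
  have hdy : d < y := Int.emod_lt_of_pos _ hy'
  have hc1 : -1 ≤ c := by nlinarith
  have hcx : c < x := by nlinarith
  have hc : |c| ≤ x := abs_le.mpr ⟨by omega, hcx.le⟩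
  have hd : |d| ≤ y := abs_le.mpr ⟨by omega, hdy.le⟩
  refine ⟨⟨!![(x : ℤ), y; c, d], by simp [det_fin_two]; linarith⟩, rfl, rfl, ?_⟩
  intro i j
  fin_cases i <;> fin_cases j <;> simp
  · exact Or.inl (by exact_mod_cast hc)
  · exact Or.inr (by exact_mod_cast hd)

def rho : SL(2, ℤ) := ⟨!![0, -1; 1, -1], by norm_num [det_fin_two]⟩

@[simp] lemma coe_rho : (rho : Matrix (Fin 2) (Fin 2) ℤ) = !![0, -1; 1, -1] := rfl

lemma rho_pow_three : rho ^ 3 = 1 := by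
  ext i j
  fin_cases i <;> fin_cases j <;> simp [pow_succ, Matrix.SpecialLinearGroup.coe_mul]

lemma eq_one_of_commute_rho {h : SL(2, ℤ)} (hc : Commute h rho) {x y : ℤ} (hx : 0 < x) (hy : 0 < y)
    (hx' : 0 < x * h 0 0 + y * h 1 0) (hy' : 0 < x * h 0 1 + y * h 1 1) : h = 1 := by
  have hent := congrArg (fun M : SL(2, ℤ) => (M : Matrix (Fin 2) (Fin 2) ℤ)) hc.eq
  simp only [Matrix.SpecialLinearGroup.coe_mul, coe_rho] at hent
  have h10 : h 1 0 = - h 0 1 := by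
    have := congrFun₂ hent 0 0
    simp [mul_apply, Fin.sum_univ_two] at this; linarith
  have h11 : h 1 1 = h 0 0 + h 0 1 := by
    have := congrFun₂ hent 0 1
    simp [mul_apply, Fin.sum_univ_two] at this; linarith
  have hdet : h 0 0 * h 1 1 - h 0 1 * h 1 0 = 1 := by rw [← det_fin_two]; exact h.2
  simp only [h10, h11] at hdet hx' hy'
  have h00 : h 0 0 = 1 ∧ h 0 1 = 0 := by
    generalize h 0 0 = α, h 0 1 = β at hdet hx' hy' ⊢
    obtain ⟨hα₁, hα₂⟩ : -1 ≤ α ∧ α ≤ 1 := by constructor <;> nlinarith [sq_nonneg (α + 2 * β)]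
    obtain ⟨hβ₁, hβ₂⟩ : -1 ≤ β ∧ β ≤ 1 := by constructor <;> nlinarith [sq_nonneg (2 * α + β)]
    interval_cases α <;> interval_cases β <;> omega
  ext i j
  fin_cases i <;> fin_cases j <;> simp [h10, h11, h00]

lemma injOn_conj_rho :
    Set.InjOn (fun g : SL(2, ℤ) => g * rho * g⁻¹) {g | 0 < g 0 0 ∧ 0 < g 0 1} := by
  rintro g ⟨hx, hy⟩ g' ⟨hx', hy'⟩ (he : g * rho * g⁻¹ = g' * rho * g'⁻¹)
  obtain ⟨h, rfl⟩ : ∃ h, g' = g * h := ⟨g⁻¹ * g', by group⟩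
  have hc : Commute h rho := calc
    h * rho = g⁻¹ * (g * h * rho * (g * h)⁻¹) * (g * h) := by group
    _ = g⁻¹ * (g * rho * g⁻¹) * (g * h) := by rw [he]
    _ = rho * h := by group
  simp only [Matrix.SpecialLinearGroup.coe_mul, mul_apply, Fin.sum_univ_two] at hx' hy'
  rw [eq_one_of_commute_rho hc hx hy hx' hy', mul_one]

lemma ncard_isHeightLE_firstRow_pos_ge {Y : ℝ} (hY : 2 ≤ Y) :
    Y ^ 2 / 16 ≤ {g : SL(2, ℤ) | IsHeightLE Y (g : Matrix (Fin 2) (Fin 2) ℤ) ∧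
      0 < g 0 0 ∧ 0 < g 0 1}.ncard := by
  set n := ⌊Y⌋₊
  set S := {g : SL(2, ℤ) | IsHeightLE Y (g : Matrix (Fin 2) (Fin 2) ℤ) ∧ 0 < g 0 0 ∧ 0 < g 0 1}
  have hS : S.Finite := (IsHeightLE.finite_SL Y).subset fun g hg => hg.1
  have hcop : (↑{p ∈ Ioc 0 n ×ˢ Ioc 0 n | p.1.Coprime p.2} : Set (ℕ × ℕ)) ⊆
      (fun g : SL(2, ℤ) => ((g 0 0).toNat, (g 0 1).toNat)) '' S := by
    rintro ⟨x, y⟩ hp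
    simp only [coe_filter, mem_product, mem_Ioc, Set.mem_ofPred_eq] at hp
    obtain ⟨⟨⟨hx, hxn⟩, hy, hyn⟩, hxy⟩ := hp
    obtain ⟨g, hg0, hg1, hg⟩ := Matrix.SpecialLinearGroup.exists_row_zero_eq_of_coprime hx hy hxy
    have hnY : (n : ℝ) ≤ Y := Nat.floor_le (by linarith)
    refine ⟨g, ⟨fun i j => (hg i j).trans (max_le ?_ ?_), by omega, by omega⟩, by simp [hg0, hg1]⟩
    · exact (Nat.cast_le.mpr hxn).trans hnY
    · exact (Nat.cast_le.mpr hyn).trans hnY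
  have hn : Y / 2 ≤ n := by linarith [Nat.lt_floor_add_one Y]
  calc (Y ^ 2 / 16 : ℝ) ≤ (n : ℝ) ^ 2 / 4 := by nlinarith
    _ ≤ #{p ∈ Ioc 0 n ×ˢ Ioc 0 n | p.1.Coprime p.2} := card_coprime_pairs_ge n
    _ ≤ (S.ncard : ℝ) := by
      rw [← Set.ncard_coe_finset]
      exact_mod_cast (Set.ncard_le_ncard hcop (hS.image _)).trans (Set.ncard_image_le hS)

lemma isHeightLE_rho : IsHeightLE 1 (rho : Matrix (Fin 2) (Fin 2) ℤ) := by
  intro i j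
  fin_cases i <;> fin_cases j <;> simp

lemma ncard_pow_three_eq_one_ge {X : ℝ} (hX : 16 ≤ X) :
    X / 64 ≤ {A : SL(2, ℤ) | IsHeightLE X (A : Matrix (Fin 2) (Fin 2) ℤ) ∧ A ^ 3 = 1}.ncard := by
  set Y := √X / 2
  have hY : 2 ≤ Y := by
    have : √16 ≤ √X := Real.sqrt_le_sqrt hX
    rw [show (16 : ℝ) = 4 ^ 2 by norm_num, Real.sqrt_sq (by norm_num)] at this
    show 2 ≤ √X / 2
    linarith
  have hXY : 4 * Y ^ 2 = X := by
    rw [div_pow, Real.sq_sqrt (by linarith)]; ring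
  set P := {g : SL(2, ℤ) | IsHeightLE Y (g : Matrix (Fin 2) (Fin 2) ℤ) ∧ 0 < g 0 0 ∧ 0 < g 0 1}
  have hsub : (fun g => g * rho * g⁻¹) '' P ⊆
      {A : SL(2, ℤ) | IsHeightLE X (A : Matrix (Fin 2) (Fin 2) ℤ) ∧ A ^ 3 = 1} := by
    rintro _ ⟨g, hg, rfl⟩
    refine ⟨hXY ▸ hg.1.conj isHeightLE_rho, ?_⟩
    rw [conj_pow, rho_pow_three, mul_one, mul_inv_cancel]
  calc X / 64 = Y ^ 2 / 16 := by rw [← hXY]; ring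
    _ ≤ P.ncard := ncard_isHeightLE_firstRow_pos_ge hY
    _ = ((fun g => g * rho * g⁻¹) '' P).ncard := by
      rw [(injOn_conj_rho.mono fun g hg => hg.2).ncard_image]
    _ ≤ _ := by
      exact_mod_cast Set.ncard_le_ncard hsub ((IsHeightLE.finite_SL X).subset fun A hA => hA.1)

lemma isNonFreeTuple_of_pow_eq_one {s n : ℕ} (A : Fin s → SL(2, ℤ)) (k : Fin s) (hn : 0 < n)
    (h : A k ^ n = 1) : IsNonFreeTuple A :=
  ⟨n, hn, fun _ => k, fun _ => 1, fun _ _ => Or.inl rfl, fun _ _ h => by norm_num at h,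
    by simpa [List.map_const'] using h⟩

lemma ncard_isNonFreeTuple_ge {X : ℝ} (hX : 16 ≤ X) (m : ℕ) :
    X / 64 * (X ^ 2 / 16) ^ m ≤ {A : Fin (m + 1) → SL(2, ℤ) |
      (∀ k, IsHeightLE X (A k : Matrix (Fin 2) (Fin 2) ℤ)) ∧ IsNonFreeTuple A}.ncard := by
  set H := {A : SL(2, ℤ) | IsHeightLE X (A : Matrix (Fin 2) (Fin 2) ℤ)}
  set C := {A : SL(2, ℤ) | IsHeightLE X (A : Matrix (Fin 2) (Fin 2) ℤ) ∧ A ^ 3 = 1}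
  set B := Set.univ.pi fun k : Fin (m + 1) => if k = 0 then C else H
  have hsub : B ⊆ {A | (∀ k, IsHeightLE X (A k : Matrix (Fin 2) (Fin 2) ℤ)) ∧
      IsNonFreeTuple A} := by
    intro A hA
    have hA0 : A 0 ∈ C := by simpa using hA 0 (Set.mem_univ _)
    refine ⟨fun k => ?_, isNonFreeTuple_of_pow_eq_one A 0 three_pos hA0.2⟩
    have : A k ∈ if k = 0 then C else H := hA k (Set.mem_univ _)
    split_ifs at this with hk
    exacts [this.1, this]
  have hfin : {A : Fin (m + 1) → SL(2, ℤ) |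
      (∀ k, IsHeightLE X (A k : Matrix (Fin 2) (Fin 2) ℤ)) ∧ IsNonFreeTuple A}.Finite :=
    (Set.Finite.pi fun _ => IsHeightLE.finite_SL X).subset fun A hA k _ => hA.1 k
  have hH : X ^ 2 / 16 ≤ H.ncard := (ncard_isHeightLE_firstRow_pos_ge (by linarith)).trans
    (by exact_mod_cast Set.ncard_le_ncard (fun g (hg : _ ∧ _) => hg.1) (IsHeightLE.finite_SL X))
  calc X / 64 * (X ^ 2 / 16) ^ m ≤ (C.ncard * H.ncard ^ m : ℕ) := by
        push_cast
        gcongr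
        · exact ncard_pow_three_eq_one_ge hX
    _ = B.ncard := by
      rw [Set.ncard_univ_pi, Fin.prod_univ_succ]
      simp [Fin.succ_ne_zero]
    _ ≤ _ := by exact_mod_cast Set.ncard_le_ncard hsub hfin

/-- there is `c > 0` such that for all sufficiently large `X` the number of
`A ∈ SL₂(ℤ)` of height at most `X` with `A³ = 1` is at least `cX`; consequently for each
`s ≥ 1` the number of non-free `s`-tuples of height at most `X` is `≫ X^{2s-1}`. -/
theorem stmt9 :
    (∃ c : ℝ, 0 < c ∧ ∃ X₀ : ℝ, ∀ X : ℝ, X₀ ≤ X →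
      c * X ≤ ({A : Matrix.SpecialLinearGroup (Fin 2) ℤ |
          (∀ i j, (|A.1 i j| : ℝ) ≤ X) ∧ A ^ 3 = 1}.ncard : ℝ)) ∧
    ∀ s : ℕ, 1 ≤ s → ∃ c' : ℝ, 0 < c' ∧ ∃ X₁ : ℝ, ∀ X : ℝ, X₁ ≤ X →
      c' * X ^ (2 * s - 1) ≤
        ({A : Fin s → Matrix.SpecialLinearGroup (Fin 2) ℤ |
            (∀ k, ∀ i j, (|(A k).1 i j| : ℝ) ≤ X) ∧ IsNonFreeTuple A}.ncard : ℝ) := by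
  refine ⟨⟨1 / 64, by norm_num, 16, fun X hX => ?_⟩, fun s hs => ?_⟩
  · exact (by ring : 1 / 64 * X = X / 64).trans_le (ncard_pow_three_eq_one_ge hX)
  · obtain ⟨m, rfl⟩ : ∃ m, s = m + 1 := ⟨s - 1, by omega⟩
    refine ⟨1 / 64 * (1 / 16) ^ m, by positivity, 16, fun X hX => ?_⟩
    calc 1 / 64 * (1 / 16) ^ m * X ^ (2 * (m + 1) - 1) = X / 64 * (X ^ 2 / 16) ^ m := by
          rw [show 2 * (m + 1) - 1 = 2 * m + 1 by omega]; ring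
      _ ≤ _ := ncard_isNonFreeTuple_ge hX m
end

section
/- The number of 2×2 integer matrices A = [[a,b],[c,d]] with a + d = -1, ad - bc = 1, and max(|a|,|b|,|c|,|d|) ≤ X is at least cX for some absolute constant c > 0 and all X ≥ 2. -/
/-! Conjugate `M₀ = [[0, -1], [1, -1]]` by `g = [[p, q], [r, s]] ∈ SL₂(ℤ)` whose bottom row is a
coprime pair in `[1, N]²` and whose top row is the Bezout solution with `0 ≤ p, q ≤ N`: the
conjugate has height at most `3N²`. Two such conjugates coincide only if `g₂⁻¹ g₁` centralizes
`M₀`, i.e. is one of the six units of `ℤ[ω]`, and positivity of the bottom rows forces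
`g₂⁻¹ g₁ = 1`. Since at least `N² / 12` pairs in `[1, N]²` are coprime, taking `3N² ≍ X`
gives `≫ X` matrices. -/

open Finset

lemma sum_Icc_two_inv_sq_le (N : ℕ) : ∑ d ∈ Icc 2 N, ((d : ℝ) ^ 2)⁻¹ ≤ 11 / 12 := by
  have hsub : Icc 2 N ⊆ insert 2 (Ioo 2 (N + 1)) := by
    intro d hd
    simp only [mem_Icc] at hd
    simp only [mem_insert, mem_Ioo]
    omega
  calc ∑ d ∈ Icc 2 N, ((d : ℝ) ^ 2)⁻¹
      ≤ ∑ d ∈ insert 2 (Ioo 2 (N + 1)), ((d : ℝ) ^ 2)⁻¹ :=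
        sum_le_sum_of_subset_of_nonneg hsub fun _ _ _ => by positivity
    _ = 1 / 4 + ∑ d ∈ Ioo 2 (N + 1), ((d : ℝ) ^ 2)⁻¹ := by
        rw [sum_insert (by simp)]; norm_num
    _ ≤ 1 / 4 + 2 / (2 + 1) := by gcongr; exact_mod_cast sum_Ioo_inv_sq_le 2 (N + 1)
    _ = 11 / 12 := by norm_num

def coprimePairs (N : ℕ) : Finset (ℕ × ℕ) :=
  (Ioc 0 N ×ˢ Ioc 0 N).filter fun x => x.1.Coprime x.2

lemma card_filter_not_coprime_le (N : ℕ) :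
    #((Ioc 0 N ×ˢ Ioc 0 N).filter fun x => ¬ x.1.Coprime x.2) ≤ ∑ d ∈ Icc 2 N, (N / d) ^ 2 := by
  have hsub : ((Ioc 0 N ×ˢ Ioc 0 N).filter fun x => ¬ x.1.Coprime x.2) ⊆
      (Icc 2 N).biUnion fun d => {x ∈ Ioc 0 N | d ∣ x} ×ˢ {x ∈ Ioc 0 N | d ∣ x} := by
    rintro ⟨r, s⟩ hx
    simp only [mem_filter, mem_product, mem_Ioc] at hx
    obtain ⟨⟨⟨hr, hrN⟩, hs, hsN⟩, hcop⟩ := hx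
    have hg : 0 < r.gcd s := Nat.gcd_pos_of_pos_left s hr
    have hgr : r.gcd s ≤ r := Nat.le_of_dvd hr (Nat.gcd_dvd_left r s)
    simp only [mem_biUnion, mem_Icc, mem_product, mem_filter, mem_Ioc]
    exact ⟨r.gcd s, ⟨by unfold Nat.Coprime at hcop; omega, by omega⟩,
      ⟨⟨hr, hrN⟩, Nat.gcd_dvd_left r s⟩, ⟨hs, hsN⟩, Nat.gcd_dvd_right r s⟩
  calc _ ≤ _ := card_le_card hsub
    _ ≤ _ := card_biUnion_le
    _ = ∑ d ∈ Icc 2 N, (N / d) ^ 2 := by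
        simp only [card_product, Nat.Ioc_filter_dvd_card_eq_div, sq]

lemma card_coprimePairs_ge (N : ℕ) : (N : ℝ) ^ 2 / 12 ≤ #(coprimePairs N) := by
  have hsplit := card_filter_add_card_filter_not (s := Ioc 0 N ×ˢ Ioc 0 N)
    (fun x => x.1.Coprime x.2)
  rw [card_product, Nat.card_Ioc, Nat.sub_zero] at hsplit
  have hbad : (#((Ioc 0 N ×ˢ Ioc 0 N).filter fun x => ¬ x.1.Coprime x.2) : ℝ) ≤
      11 / 12 * (N : ℝ) ^ 2 :=
    calc _ ≤ ((∑ d ∈ Icc 2 N, (N / d) ^ 2 : ℕ) : ℝ) := by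
          exact_mod_cast card_filter_not_coprime_le N
      _ ≤ ∑ d ∈ Icc 2 N, ((N : ℝ) / d) ^ 2 := by
          push_cast
          gcongr
          exact Nat.cast_div_le
      _ = (N : ℝ) ^ 2 * ∑ d ∈ Icc 2 N, ((d : ℝ) ^ 2)⁻¹ := by
          rw [mul_sum]; exact sum_congr rfl fun _ _ => by ring
      _ ≤ (N : ℝ) ^ 2 * (11 / 12) := by gcongr; exact sum_Icc_two_inv_sq_le N
      _ = 11 / 12 * (N : ℝ) ^ 2 := mul_comm _ _
  have hsplitR : (#(coprimePairs N) : ℝ) + #((Ioc 0 N ×ˢ Ioc 0 N).filter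
      fun x => ¬ x.1.Coprime x.2) = (N : ℝ) ^ 2 := by
    exact_mod_cast (sq N).symm ▸ hsplit
  linarith

lemma Int.exists_mul_sub_mul_eq_one_of_isCoprime {r s : ℤ} (hr : 0 < r) (hs : 0 < s)
    (h : IsCoprime r s) : ∃ p q : ℤ, p * s - q * r = 1 ∧ 0 < p ∧ p ≤ r ∧ 0 ≤ q ∧ q < s := by
  obtain ⟨u, v, huv⟩ := h
  have hq0 : 0 ≤ -u % s := Int.emod_nonneg _ hs.ne'
  have hqs : -u % s < s := Int.emod_lt_of_pos _ hs
  obtain ⟨p, hp⟩ : s ∣ -u % s * r + 1 :=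
    ⟨v - -u / s * r, by rw [Int.emod_def]; linear_combination -huv⟩
  exact ⟨p, -u % s, by linarith, by nlinarith, by nlinarith, hq0, hqs⟩

lemma Int.eq_of_sq_add_mul_add_sq_eq_one {α β : ℤ} (h : α ^ 2 + α * β + β ^ 2 = 1) :
    (α = 1 ∧ β = 0) ∨ (α = -1 ∧ β = 0) ∨ (α = 0 ∧ β = 1) ∨ (α = 0 ∧ β = -1) ∨
      (α = 1 ∧ β = -1) ∨ (α = -1 ∧ β = 1) := by
  have hβ : β ^ 2 ≤ 1 := by nlinarith [sq_nonneg (2 * α + β)]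
  have hα : α ^ 2 ≤ 1 := by nlinarith [sq_nonneg (α + 2 * β)]
  have hβ₁ : -1 ≤ β := by nlinarith
  have hβ₂ : β ≤ 1 := by nlinarith
  have hα₁ : -1 ≤ α := by nlinarith
  have hα₂ : α ≤ 1 := by nlinarith
  interval_cases α <;> interval_cases β <;> simp_all

/-- The entries `(a, b, c, d)` of `g M₀ g⁻¹`, for `g = [[p, q], [r, s]] ∈ SL₂(ℤ)` and
`M₀ = [[0, -1], [1, -1]]`. -/
def conjOmega (p q r s : ℤ) : ℤ × ℤ × ℤ × ℤ :=
  (p * r + q * r + q * s, -(p * p + p * q + q * q), r * r + r * s + s * s,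
    -(p * r + p * s + q * s))

lemma bottomRow_eq_of_conjOmega_eq {p₁ q₁ r₁ s₁ p₂ q₂ r₂ s₂ : ℤ}
    (h₁ : p₁ * s₁ - q₁ * r₁ = 1) (h₂ : p₂ * s₂ - q₂ * r₂ = 1)
    (hr₁ : 0 < r₁) (hs₁ : 0 < s₁) (hr₂ : 0 < r₂) (hs₂ : 0 < s₂)
    (h : conjOmega p₁ q₁ r₁ s₁ = conjOmega p₂ q₂ r₂ s₂) : r₁ = r₂ ∧ s₁ = s₂ := by
  simp only [conjOmega, Prod.mk.injEq] at h
  obtain ⟨ha, hb, hc, hd⟩ := h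
  -- `[[α, β], [-β, α + β]]` is `g₂⁻¹ g₁`, which commutes with `M₀`.
  set α := s₂ * p₁ - q₂ * r₁
  set β := s₂ * q₁ - q₂ * s₁
  have hγ : p₂ * r₁ - r₂ * p₁ = -β := by
    linear_combination s₂ * p₁ * ha + s₂ * r₁ * hb - q₂ * p₁ * hc - q₂ * r₁ * hd
      - β * h₁ - (p₂ * r₁ - r₂ * p₁) * h₂
  have hδ : p₂ * s₁ - r₂ * q₁ = α + β := by
    linear_combination -(r₂ * p₁) * ha - r₂ * r₁ * hb + p₂ * p₁ * hc + p₂ * r₁ * hd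
      - (p₂ * s₁ - r₂ * q₁) * h₁ + (α - (p₂ * r₁ - r₂ * p₁)) * h₂ - hγ
  have hr : r₁ = α * r₂ - β * s₂ := by linear_combination -r₁ * h₂ + s₂ * hγ
  have hs : s₁ = β * r₂ + (α + β) * s₂ := by linear_combination -s₁ * h₂ + s₂ * hδ
  have hunit : α ^ 2 + α * β + β ^ 2 = 1 := by
    linear_combination (p₂ * s₂ - q₂ * r₂) * h₁ + h₂ - α * hδ + β * hγ
  rcases Int.eq_of_sq_add_mul_add_sq_eq_one hunit with
    ⟨hα, hβ⟩ | ⟨hα, hβ⟩ | ⟨hα, hβ⟩ | ⟨hα, hβ⟩ | ⟨hα, hβ⟩ | ⟨hα, hβ⟩ <;>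
  rw [hα, hβ] at hr hs <;> omega

/-- Trace `-1` and determinant `1` say the characteristic polynomial is `X² + X + 1`, so these
are the elements of order three in `SL₂(ℤ)` of height at most `X`. -/
def orderThreeOfHeight (X : ℝ) : Set (ℤ × ℤ × ℤ × ℤ) :=
  {p | p.1 + p.2.2.2 = -1 ∧ p.1 * p.2.2.2 - p.2.1 * p.2.2.1 = 1 ∧
    (|p.1| : ℝ) ≤ X ∧ (|p.2.1| : ℝ) ≤ X ∧ (|p.2.2.1| : ℝ) ≤ X ∧ (|p.2.2.2| : ℝ) ≤ X}

lemma orderThreeOfHeight_mono {X Y : ℝ} (h : X ≤ Y) :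
    orderThreeOfHeight X ⊆ orderThreeOfHeight Y := by
  rintro ⟨a, b, c, d⟩ ⟨htr, hdet, ha, hb, hc, hd⟩
  exact ⟨htr, hdet, ha.trans h, hb.trans h, hc.trans h, hd.trans h⟩

lemma orderThreeOfHeight_finite (X : ℝ) : (orderThreeOfHeight X).Finite := by
  have hbound : ∀ z : ℤ, (|z| : ℝ) ≤ X → -⌈X⌉ ≤ z ∧ z ≤ ⌈X⌉ := fun z hz =>
    abs_le.mp (Int.cast_le.mp ((Int.cast_abs (R := ℝ)).symm ▸ hz |>.trans (Int.le_ceil X)))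
  refine (Set.finite_Icc (-⌈X⌉, -⌈X⌉, -⌈X⌉, -⌈X⌉) (⌈X⌉, ⌈X⌉, ⌈X⌉, ⌈X⌉)).subset ?_
  rintro ⟨a, b, c, d⟩ ⟨-, -, ha, hb, hc, hd⟩
  obtain ⟨ha₁, ha₂⟩ := hbound a ha
  obtain ⟨hb₁, hb₂⟩ := hbound b hb
  obtain ⟨hc₁, hc₂⟩ := hbound c hc
  obtain ⟨hd₁, hd₂⟩ := hbound d hd
  exact ⟨⟨ha₁, hb₁, hc₁, hd₁⟩, ⟨ha₂, hb₂, hc₂, hd₂⟩⟩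

lemma mul_mem_Icc_zero_sq {x y N : ℤ} (hx : x ∈ Set.Icc 0 N) (hy : y ∈ Set.Icc 0 N) :
    x * y ∈ Set.Icc 0 (N ^ 2) :=
  ⟨mul_nonneg hx.1 hy.1, sq N ▸ mul_le_mul hx.2 hy.2 hy.1 (hx.1.trans hx.2)⟩

lemma abs_add_add_le_of_mem_Icc {u v w M : ℤ} (hu : u ∈ Set.Icc 0 M) (hv : v ∈ Set.Icc 0 M)
    (hw : w ∈ Set.Icc 0 M) : |u + v + w| ≤ 3 * M :=
  abs_le.mpr ⟨by linarith [hu.1, hv.1, hw.1, hu.2], by linarith [hu.2, hv.2, hw.2]⟩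

lemma conjOmega_mem_orderThreeOfHeight {p q r s N : ℤ} (hdet : p * s - q * r = 1)
    (hp : p ∈ Set.Icc 0 N) (hq : q ∈ Set.Icc 0 N) (hr : r ∈ Set.Icc 0 N) (hs : s ∈ Set.Icc 0 N) :
    conjOmega p q r s ∈ orderThreeOfHeight ((3 * N ^ 2 : ℤ) : ℝ) := by
  have hbound {x y z x' y' z' : ℤ} (hx : x ∈ Set.Icc 0 N) (hy : y ∈ Set.Icc 0 N)
      (hz : z ∈ Set.Icc 0 N) (hx' : x' ∈ Set.Icc 0 N) (hy' : y' ∈ Set.Icc 0 N)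
      (hz' : z' ∈ Set.Icc 0 N) :
      |((x * x' + y * y' + z * z' : ℤ) : ℝ)| ≤ ((3 * N ^ 2 : ℤ) : ℝ) := by
    exact_mod_cast abs_add_add_le_of_mem_Icc (mul_mem_Icc_zero_sq hx hx')
      (mul_mem_Icc_zero_sq hy hy') (mul_mem_Icc_zero_sq hz hz')
  simp only [orderThreeOfHeight, conjOmega, Set.mem_ofPred_eq, Int.cast_neg, abs_neg]
  exact ⟨by linear_combination -hdet, by linear_combination (p * s - q * r + 1) * hdet,
    hbound hp hq hq hr hr hs, hbound hp hp hq hp hq hq, hbound hr hr hs hr hs hs,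
    hbound hp hp hq hr hs hs⟩

lemma card_coprimePairs_le_ncard_orderThreeOfHeight (N : ℕ) :
    #(coprimePairs N) ≤ (orderThreeOfHeight (3 * (N : ℝ) ^ 2)).ncard := by
  have hpos {x : ℕ × ℕ} (hx : x ∈ coprimePairs N) :
      (0 : ℤ) < x.1 ∧ (x.1 : ℤ) ≤ N ∧ (0 : ℤ) < x.2 ∧ (x.2 : ℤ) ≤ N := by
    simp only [coprimePairs, mem_filter, mem_product, mem_Ioc] at hx
    omega
  have hbez : ∀ x ∈ coprimePairs N, ∃ pq : ℤ × ℤ, pq.1 * x.2 - pq.2 * x.1 = 1 ∧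
      0 < pq.1 ∧ pq.1 ≤ x.1 ∧ 0 ≤ pq.2 ∧ pq.2 < x.2 := fun x hx => by
    have hcop : IsCoprime (x.1 : ℤ) x.2 :=
      Nat.isCoprime_iff_coprime.mpr (mem_filter.mp hx).2
    obtain ⟨p, q, h⟩ :=
      Int.exists_mul_sub_mul_eq_one_of_isCoprime (hpos hx).1 (hpos hx).2.2.1 hcop
    exact ⟨(p, q), h⟩
  choose! g hg using hbez
  rw [← Set.ncard_coe_finset]
  refine Set.ncard_le_ncard_of_injOn (fun x => conjOmega (g x).1 (g x).2 x.1 x.2) ?_ ?_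
    (orderThreeOfHeight_finite _)
  · intro x hx
    obtain ⟨hr, hrN, hs, hsN⟩ := hpos hx
    obtain ⟨hdet, hp, hpr, hq, hqs⟩ := hg x hx
    have hmem := conjOmega_mem_orderThreeOfHeight hdet (N := N) ⟨hp.le, hpr.trans hrN⟩
      ⟨hq, by omega⟩ ⟨hr.le, hrN⟩ ⟨hs.le, hsN⟩
    exact_mod_cast hmem
  · intro x hx y hy hxy
    obtain ⟨hr₁, -, hs₁, -⟩ := hpos hx
    obtain ⟨hr₂, -, hs₂, -⟩ := hpos hy
    obtain ⟨hr, hs⟩ := bottomRow_eq_of_conjOmega_eq (hg x hx).1 (hg y hy).1 hr₁ hs₁ hr₂ hs₂ hxy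
    exact Prod.ext (by exact_mod_cast hr) (by exact_mod_cast hs)

lemma exists_nat_three_mul_sq_le_le_twelve_mul_sq {X : ℝ} (hX : 3 ≤ X) :
    ∃ N : ℕ, 3 * (N : ℝ) ^ 2 ≤ X ∧ X ≤ 12 * (N : ℝ) ^ 2 := by
  set t := √(X / 3)
  have ht : t ^ 2 = X / 3 := Real.sq_sqrt (by linarith)
  have ht1 : 1 ≤ t := Real.one_le_sqrt.mpr (by linarith)
  refine ⟨⌊t⌋₊, ?_, ?_⟩
  · nlinarith [Nat.floor_le (zero_le_one.trans ht1)]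
  · have hlt : t < ⌊t⌋₊ + 1 := Nat.lt_floor_add_one t
    have hone : (1 : ℝ) ≤ ⌊t⌋₊ := by exact_mod_cast Nat.one_le_floor_iff t |>.mpr ht1
    nlinarith

/-- the number of 2×2 integer matrices `[[a,b],[c,d]]` with `a + d = -1`,
`ad - bc = 1` and height at most `X` is at least `cX` for some absolute `c > 0`. -/
theorem stmt11 :
    ∃ c : ℝ, 0 < c ∧ ∀ X : ℝ, 2 ≤ X →
      c * X ≤ ({p : ℤ × ℤ × ℤ × ℤ |
          p.1 + p.2.2.2 = -1 ∧
          p.1 * p.2.2.2 - p.2.1 * p.2.2.1 = 1 ∧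
          (|p.1| : ℝ) ≤ X ∧ (|p.2.1| : ℝ) ≤ X ∧ (|p.2.2.1| : ℝ) ≤ X ∧
          (|p.2.2.2| : ℝ) ≤ X}.ncard : ℝ) := by
  refine ⟨1 / 144, by norm_num, fun X hX => ?_⟩
  change 1 / 144 * X ≤ ((orderThreeOfHeight X).ncard : ℝ)
  rcases lt_or_ge X 3 with hX3 | hX3
  · have hmem : ((0, -1, 1, -1) : ℤ × ℤ × ℤ × ℤ) ∈ orderThreeOfHeight X := by
      refine ⟨by norm_num, by norm_num, ?_, ?_, ?_, ?_⟩ <;> norm_num <;> linarith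
    have hone : 0 < (orderThreeOfHeight X).ncard :=
      (Set.ncard_pos (orderThreeOfHeight_finite X)).mpr ⟨_, hmem⟩
    have hone' : (1 : ℝ) ≤ (orderThreeOfHeight X).ncard := by exact_mod_cast hone
    linarith
  · obtain ⟨N, hlo, hhi⟩ := exists_nat_three_mul_sq_le_le_twelve_mul_sq hX3
    calc 1 / 144 * X ≤ (N : ℝ) ^ 2 / 12 := by linarith
      _ ≤ #(coprimePairs N) := card_coprimePairs_ge N
      _ ≤ (orderThreeOfHeight (3 * (N : ℝ) ^ 2)).ncard := by
          exact_mod_cast card_coprimePairs_le_ncard_orderThreeOfHeight N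
      _ ≤ (orderThreeOfHeight X).ncard := by
          exact_mod_cast Set.ncard_le_ncard (orderThreeOfHeight_mono hlo)
            (orderThreeOfHeight_finite X)
end

section
/- There is a constant c > 0 such that for all integers Q ≥ 1 and reals X with Q ≤ X, the cardinality of Γ₀(Q, X) = {A ∈ Γ₀(Q) : height of A ≤ X} is at least c · X² / (Q · log log (X + 3)). -/
/-!
For `c = Q m ≤ X`, each residue `a` modulo `c` that is coprime to `c` completes to a matrix
`[[a, b], [c, d]] ∈ Γ₀(Q)` with `0 ≤ a, d < c` and `|b| ≤ c`, so `#Γ₀(Q, X) ≥ ∑_{m ≤ X/Q} φ(Q m)`,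
and `φ(Q m) ≫ Q m / log log X` summed over `m ≤ X/Q` gives `X² / (Q log log X)`.

It remains to show `φ(n) ≥ e⁻⁸ n / log log (n + 3)`. Since `1 - 1/p ≥ exp (-1/(p-1))`, we have
`φ(n) ≥ n exp (-∑_{p ∣ n} 1/(p-1))`. The prime factors above `y = log (n + 3)` number at most
`log₂ n`, so they contribute `O(1)`; those below `y` contribute at most `log log y + 5` by a
Mertens-type estimate, obtained by partial summation from `∑_{p ≤ N} log p / p ≤ log N + log 4`,
which in turn comes from Legendre's formula `∏_{p ≤ N} p ^ ⌊N/p⌋ ∣ N!` and Chebyshev's bound on `θ`.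
-/

open Finset Real

lemma prod_primesLE_pow_div_dvd_factorial (N : ℕ) :
    ∏ p ∈ N.primesLE, p ^ (N / p) ∣ N.factorial := by
  refine prod_dvd_of_isRelPrime ?_ fun p hp => ?_
  · intro p hp q hq hpq
    exact Nat.coprime_iff_isRelPrime.1 <| Nat.Coprime.pow _ _ <|
      (Nat.coprime_primes (Nat.prime_of_mem_primesLE hp) (Nat.prime_of_mem_primesLE hq)).2 hpq
  · have hp' := Nat.prime_of_mem_primesLE hp
    rw [hp'.pow_dvd_factorial_iff (b := N + 1) (Nat.lt_succ_of_le (Nat.log_le_self p N))]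
    have h1 : 1 ∈ Ico 1 (N + 1) := by
      have := hp'.two_le.trans (Nat.le_of_mem_primesLE hp)
      rw [mem_Ico]; omega
    simpa using single_le_sum (f := fun i => N / p ^ i) (fun _ _ => Nat.zero_le _) h1

lemma sum_primesLE_log_div_le (N : ℕ) :
    ∑ p ∈ N.primesLE, log p / p ≤ log N + log 4 := by
  rcases N.eq_zero_or_pos with rfl | hN
  · simp only [Nat.primesLE_zero, sum_empty, Nat.cast_zero, log_zero, zero_add]
    positivity
  have hNR : (0 : ℝ) < N := by exact_mod_cast hN
  have hfloor : ∀ p ∈ N.primesLE, ((N : ℝ) / p - 1) * log p ≤ ((N / p : ℕ) : ℝ) * log p := by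
    intro p hp
    gcongr
    rw [← Nat.floor_div_eq_div (K := ℝ)]
    exact (Nat.sub_one_lt_floor _).le
  have hlegendre : ∑ p ∈ N.primesLE, ((N / p : ℕ) : ℝ) * log p ≤ N * log N := by
    have hpos : ∀ p ∈ N.primesLE, (0 : ℝ) < p := fun p hp => by
      exact_mod_cast (Nat.prime_of_mem_primesLE hp).pos
    calc ∑ p ∈ N.primesLE, ((N / p : ℕ) : ℝ) * log p
        = log (∏ p ∈ N.primesLE, p ^ (N / p) : ℕ) := by
          push_cast
          rw [log_prod fun p hp => (pow_pos (hpos p hp) (N / p)).ne']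
          simp only [log_pow]
      _ ≤ log ((N : ℝ) ^ N) := by
          gcongr
          · exact_mod_cast prod_pos fun p hp => pow_pos (Nat.prime_of_mem_primesLE hp).pos (N / p)
          · exact_mod_cast
              (Nat.le_of_dvd N.factorial_pos (prod_primesLE_pow_div_dvd_factorial N)).trans
                N.factorial_le_pow
      _ = N * log N := log_pow N _
  have htheta : ∑ p ∈ N.primesLE, log p ≤ log 4 * N := by
    rw [← Chebyshev.theta_eq_sum_primesLE_log]
    exact Chebyshev.theta_le_log4_mul_x hNR.le
  have hsum : ∑ p ∈ N.primesLE, ((N : ℝ) / p - 1) * log p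
      = N * ∑ p ∈ N.primesLE, log p / p - ∑ p ∈ N.primesLE, log p := by
    rw [mul_sum, ← sum_sub_distrib]
    exact sum_congr rfl fun p _ => by ring
  have := (sum_le_sum hfloor).trans hlegendre
  rw [hsum] at this
  nlinarith

lemma div_add_log_le_div_add_log {s A B : ℝ} (hB : 0 < B) (hBA : B ≤ A) (hs : s ≤ B) :
    s / B + log B ≤ s / A + log A := by
  have hA : 0 < A := hB.trans_le hBA
  have hlog : 1 - B / A ≤ log A - log B := by
    rw [← log_div hA.ne' hB.ne', ← inv_div]
    exact one_sub_inv_le_log_of_pos (div_pos hA hB)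
  have hgap : s / B - s / A = s / B * (1 - B / A) := by field_simp
  have : s / B * (1 - B / A) ≤ 1 - B / A :=
    mul_le_of_le_one_left (by rw [sub_nonneg, div_le_one hA]; exact hBA) ((div_le_one hB).2 hs)
  linarith

lemma neg_one_le_log_log_two : -1 ≤ log (log 2) := by
  have h := one_sub_inv_le_log_of_pos (log_pos one_lt_two)
  have : (log 2)⁻¹ ≤ 2 := by
    rw [inv_le_comm₀ (log_pos one_lt_two) two_pos]
    linarith [log_two_gt_d9]
  linarith

/-- Discrete partial summation against `1 / log`, run as an induction on `N`; the `- 1 / N` term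
absorbs the difference between `1 / (p - 1)` and `1 / p`. -/
lemma sum_primesLE_inv_sub_one_le_div_log_add_log_log (N : ℕ) (hN : 2 ≤ N) :
    ∑ p ∈ N.primesLE, ((p : ℝ) - 1)⁻¹
      ≤ (∑ p ∈ N.primesLE, log p / p - log 4) / log N + log (log N) - (N : ℝ)⁻¹ + 4 := by
  induction N, hN using Nat.le_induction with
  | base =>
    have h2 : Nat.primesLE 2 = {2} := by decide
    have hlog4 : log 4 = 2 * log 2 := by
      rw [show (4 : ℝ) = 2 ^ 2 by norm_num, log_pow]; push_cast; ring
    have := log_pos one_lt_two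
    rw [h2, sum_singleton, sum_singleton, hlog4]
    field_simp
    norm_num
    nlinarith [neg_one_le_log_log_two]
  | succ N hN ih =>
    set R := ∑ p ∈ N.primesLE, log p / p
    have hB : 0 < log N := log_pos (by exact_mod_cast hN)
    have hBA : log N ≤ log (N + 1 : ℕ) := log_le_log (by positivity) (by push_cast; linarith)
    have hmono := div_add_log_le_div_add_log (s := R - log 4) hB hBA
      (by linarith [sum_primesLE_log_div_le N])
    have hinv : ((N + 1 : ℕ) : ℝ)⁻¹ ≤ (N : ℝ)⁻¹ := by
      gcongr; linarith
    rw [Nat.primesLE_succ]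
    split_ifs with hp
    · have hlogpos : 0 < log (N + 1 : ℕ) := hB.trans_le hBA
      rw [sum_insert (Nat.notMem_primesLE N), sum_insert (Nat.notMem_primesLE N)]
      have hsplit : (log (N + 1 : ℕ) / (N + 1 : ℕ) + R - log 4) / log (N + 1 : ℕ)
          = ((N + 1 : ℕ) : ℝ)⁻¹ + (R - log 4) / log (N + 1 : ℕ) := by
        field_simp; ring
      have hcast : ((N + 1 : ℕ) : ℝ) - 1 = N := by push_cast; ring
      rw [hsplit, hcast]
      linarith
    · linarith

lemma sum_primesLE_inv_sub_one_le (N : ℕ) (hN : 2 ≤ N) :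
    ∑ p ∈ N.primesLE, ((p : ℝ) - 1)⁻¹ ≤ log (log N) + 5 := by
  have hB : 0 < log N := log_pos (by exact_mod_cast hN)
  have hratio : (∑ p ∈ N.primesLE, log p / p - log 4) / log N ≤ 1 :=
    div_le_one_of_le₀ (by linarith [sum_primesLE_log_div_le N]) hB.le
  have : (0 : ℝ) ≤ (N : ℝ)⁻¹ := by positivity
  linarith [sum_primesLE_inv_sub_one_le_div_log_add_log_log N hN]

lemma exp_neg_inv_sub_one_le {x : ℝ} (hx : 1 < x) : exp (-(x - 1)⁻¹) ≤ 1 - x⁻¹ := by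
  have hpos : 0 < 1 - x⁻¹ := sub_pos.2 (inv_lt_one_of_one_lt₀ hx)
  have hinv : (1 - x⁻¹)⁻¹ = 1 + (x - 1)⁻¹ := by
    have : x - 1 ≠ 0 := by linarith
    field_simp; ring
  calc exp (-(x - 1)⁻¹) ≤ exp (log (1 - x⁻¹)) := by
        gcongr
        linarith [one_sub_inv_le_log_of_pos hpos]
    _ = 1 - x⁻¹ := exp_log hpos

lemma mul_exp_neg_sum_le_totient (n : ℕ) :
    n * exp (-∑ p ∈ n.primeFactors, ((p : ℝ) - 1)⁻¹) ≤ n.totient := by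
  have hprod : (n.totient : ℝ) = n * ∏ p ∈ n.primeFactors, (1 - (p : ℝ)⁻¹) := by
    have h := congrArg (Rat.cast : ℚ → ℝ) (Nat.totient_eq_mul_prod_factors n)
    push_cast at h
    exact h
  rw [hprod, ← sum_neg_distrib, exp_sum]
  gcongr with p hp
  exact exp_neg_inv_sub_one_le (by exact_mod_cast (Nat.prime_of_mem_primeFactors hp).one_lt)

lemma card_primeFactors_mul_log_two_le (n : ℕ) : #n.primeFactors * log 2 ≤ log n := by
  rcases n.eq_zero_or_pos with rfl | hn
  · simp
  rw [← log_pow]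
  gcongr
  exact_mod_cast
    (pow_card_le_prod _ _ _ fun p hp => (Nat.prime_of_mem_primeFactors hp).two_le).trans
      (Nat.le_of_dvd hn (Nat.prod_primeFactors_dvd n))

lemma sum_primeFactors_inv_sub_one_le (n : ℕ) {y : ℝ} (hy : 0 < y) :
    ∑ p ∈ n.primeFactors, ((p : ℝ) - 1)⁻¹
      ≤ ∑ p ∈ (⌊y⌋₊).primesLE, ((p : ℝ) - 1)⁻¹ + 2 * log n / (y * log 2) := by
  rw [← sum_filter_add_sum_filter_not n.primeFactors (fun p : ℕ => (p : ℝ) ≤ y)]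
  gcongr ?_ + ?_
  · refine sum_le_sum_of_subset_of_nonneg (fun p hp => ?_) fun p hp _ => ?_
    · rw [mem_filter] at hp
      exact Nat.mem_primesLE.2 ⟨Nat.le_floor hp.2, Nat.prime_of_mem_primeFactors hp.1⟩
    · have : (1 : ℝ) < p := by exact_mod_cast (Nat.prime_of_mem_primesLE hp).one_lt
      exact inv_nonneg.2 (by linarith)
  · have hbig : ∀ p ∈ n.primeFactors.filter (fun p : ℕ => ¬ (p : ℝ) ≤ y),
        ((p : ℝ) - 1)⁻¹ ≤ 2 / y := by
      intro p hp
      rw [mem_filter, not_le] at hp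
      have : (2 : ℝ) ≤ p := by exact_mod_cast (Nat.prime_of_mem_primeFactors hp.1).two_le
      rw [← inv_div]
      exact inv_anti₀ (by positivity) (by linarith)
    have hcard : (#n.primeFactors : ℝ) ≤ log n / log 2 :=
      (le_div_iff₀ (log_pos one_lt_two)).2 (card_primeFactors_mul_log_two_le n)
    calc ∑ p ∈ n.primeFactors.filter (fun p : ℕ => ¬ (p : ℝ) ≤ y), ((p : ℝ) - 1)⁻¹
        ≤ #(n.primeFactors.filter (fun p : ℕ => ¬ (p : ℝ) ≤ y)) * (2 / y) := by
          simpa using sum_le_card_nsmul _ _ _ hbig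
      _ ≤ log n / log 2 * (2 / y) := by
          gcongr
          exact (Nat.cast_le.2 (card_filter_le _ _)).trans hcard
      _ = 2 * log n / (y * log 2) := by ring

lemma one_quarter_le_log_log {x : ℝ} (hx : 4 ≤ x) : 1 / 4 ≤ log (log x) := by
  have hlog4 : 4 / 3 ≤ log 4 := by
    rw [show (4 : ℝ) = 2 ^ 2 by norm_num, log_pow]
    push_cast
    linarith [log_two_gt_d9]
  have hlogx : 4 / 3 ≤ log x := hlog4.trans (log_le_log (by norm_num) hx)
  have := one_sub_inv_le_log_of_pos (by linarith : 0 < log x)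
  have : (log x)⁻¹ ≤ 3 / 4 := by
    rw [inv_le_comm₀ (by linarith) (by norm_num)]
    linarith
  linarith

lemma log_log_pos {x : ℝ} (hx : 3 ≤ x) : 0 < log (log x) :=
  log_pos ((lt_log_iff_exp_lt (by linarith)).2 (by linarith [exp_one_lt_d9]))

lemma exp_sum_primesLE_floor_le {y : ℝ} (hy0 : 0 < y) (hy : 1 / 4 ≤ log y) :
    exp (∑ p ∈ (⌊y⌋₊).primesLE, ((p : ℝ) - 1)⁻¹) ≤ exp 5 * log y := by
  rcases lt_or_ge ⌊y⌋₊ 2 with hK | hK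
  · have : (⌊y⌋₊).primesLE = ∅ := by interval_cases ⌊y⌋₊ <;> simp
    rw [this, sum_empty, exp_zero]
    nlinarith [add_one_le_exp (5 : ℝ)]
  · calc exp (∑ p ∈ (⌊y⌋₊).primesLE, ((p : ℝ) - 1)⁻¹)
        ≤ exp (log (log ⌊y⌋₊) + 5) := exp_le_exp.2 (sum_primesLE_inv_sub_one_le _ hK)
      _ = exp 5 * log ⌊y⌋₊ := by
          rw [exp_add, exp_log (log_pos (by exact_mod_cast hK)), mul_comm]
      _ ≤ exp 5 * log y := by
          gcongr
          exact Nat.floor_le hy0.le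

lemma mul_div_log_log_le_totient (n : ℕ) : exp (-8) * n / log (log (n + 3)) ≤ n.totient := by
  rcases n.eq_zero_or_pos with rfl | hn
  · simp
  set L := log ((n : ℝ) + 3)
  have hn1 : (1 : ℝ) ≤ n := by exact_mod_cast hn
  have hL : 1 / 4 ≤ log L := one_quarter_le_log_log (by linarith)
  have hLpos : 0 < L := log_pos (by linarith)
  set h := ∑ p ∈ (⌊L⌋₊).primesLE, ((p : ℝ) - 1)⁻¹
  have hsum := sum_primeFactors_inv_sub_one_le n hLpos
  have htail : 2 * log n / (L * log 2) ≤ 3 := by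
    have hlogn : log n ≤ L := log_le_log (by positivity) (by linarith)
    rw [div_le_iff₀ (mul_pos hLpos (log_pos one_lt_two))]
    nlinarith [log_two_gt_d9]
  calc exp (-8) * n / log L
      = n * (exp (-3) / (exp 5 * log L)) := by
        rw [show (-8 : ℝ) = -3 - 5 by norm_num, exp_sub]; field_simp
    _ ≤ n * (exp (-3) / exp h) := by
        gcongr
        exact exp_sum_primesLE_floor_le hLpos hL
    _ = n * exp (-3 - h) := by rw [exp_sub]
    _ ≤ n * exp (-∑ p ∈ n.primeFactors, ((p : ℝ) - 1)⁻¹) := by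
        gcongr
        linarith
    _ ≤ n.totient := mul_exp_neg_sum_le_totient n

lemma mul_div_log_log_le_totient_of_le {n : ℕ} {X : ℝ} (hnX : (n : ℝ) ≤ X) :
    exp (-8) * n / log (log (X + 3)) ≤ n.totient := by
  have hn3 : (3 : ℝ) ≤ n + 3 := by linarith [n.cast_nonneg (α := ℝ)]
  refine le_trans ?_ (mul_div_log_log_le_totient n)
  gcongr
  · exact log_log_pos hn3
  · exact log_pos (by linarith)

lemma le_sum_range_totient_mul (q M : ℕ) {X : ℝ} (hX : (q * M : ℝ) ≤ X) :
    exp (-8) * q / log (log (X + 3)) * (M * (M + 1) / 2)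
      ≤ ∑ m ∈ range (M + 1), ((q * m).totient : ℝ) := by
  have hgauss : ∑ m ∈ range (M + 1), (m : ℝ) = M * (M + 1) / 2 := by
    have h := congrArg (Nat.cast : ℕ → ℝ) (sum_range_id_mul_two (M + 1))
    rw [Nat.add_sub_cancel] at h
    push_cast at h
    linarith
  rw [← hgauss, mul_sum]
  gcongr with m hm
  have hmM : (m : ℝ) ≤ M := by exact_mod_cast Nat.le_of_lt_succ (mem_range.1 hm)
  have := mul_div_log_log_le_totient_of_le (n := q * m) (X := X) (by push_cast; nlinarith)
  push_cast at this
  calc exp (-8) * q / log (log (X + 3)) * m = exp (-8) * (q * m) / log (log (X + 3)) := by ring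
    _ ≤ _ := this

lemma sq_le_two_mul_floor_mul_floor_add_one {t : ℝ} (ht : 1 ≤ t) :
    t ^ 2 ≤ 2 * (⌊t⌋₊ * (⌊t⌋₊ + 1)) := by
  have hlt : t < ⌊t⌋₊ + 1 := Nat.lt_floor_add_one t
  have hK : (1 : ℝ) ≤ ⌊t⌋₊ := by exact_mod_cast Nat.le_floor (by exact_mod_cast ht)
  nlinarith

/-- `Γ₀(Q, X)`, a matrix `[[a, b], [c, d]]` being encoded as `(a, b, c, d)`. -/
def gamma0UpTo (Q : ℤ) (X : ℝ) : Set (ℤ × ℤ × ℤ × ℤ) :=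
  {p : ℤ × ℤ × ℤ × ℤ |
    p.1 * p.2.2.2 - p.2.1 * p.2.2.1 = 1 ∧ Q ∣ p.2.2.1 ∧
    (|p.1| : ℝ) ≤ X ∧ (|p.2.1| : ℝ) ≤ X ∧ (|p.2.2.1| : ℝ) ≤ X ∧ (|p.2.2.2| : ℝ) ≤ X}

lemma gamma0UpTo_finite (Q : ℤ) (X : ℝ) : (gamma0UpTo Q X).Finite := by
  set A := ⌈X⌉
  have hbound : ∀ z : ℤ, (|z| : ℝ) ≤ X → -A ≤ z ∧ z ≤ A := fun z hz =>
    abs_le.1 (Int.cast_le.1 ((Int.cast_abs (R := ℝ)).symm ▸ hz |>.trans (Int.le_ceil X)))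
  refine (Set.finite_Icc (-A, -A, -A, -A) (A, A, A, A)).subset fun p hp => ?_
  obtain ⟨-, -, h₁, h₂, h₃, h₄⟩ := hp
  obtain ⟨l₁, u₁⟩ := hbound _ h₁
  obtain ⟨l₂, u₂⟩ := hbound _ h₂
  obtain ⟨l₃, u₃⟩ := hbound _ h₃
  obtain ⟨l₄, u₄⟩ := hbound _ h₄
  exact ⟨⟨l₁, l₂, l₃, l₄⟩, ⟨u₁, u₂, u₃, u₄⟩⟩

def invMod (c a : ℕ) : ℕ := ((a : ZMod c)⁻¹).val

lemma invMod_lt {c : ℕ} (hc : 0 < c) (a : ℕ) : invMod c a < c := by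
  have : NeZero c := ⟨hc.ne'⟩
  exact ZMod.val_lt _

lemma dvd_mul_invMod_sub_one {c a : ℕ} (hc : 0 < c) (hcop : c.Coprime a) :
    (c : ℤ) ∣ a * invMod c a - 1 := by
  have : NeZero c := ⟨hc.ne'⟩
  rw [← ZMod.intCast_zmod_eq_zero_iff_dvd]
  push_cast
  rw [invMod, ZMod.natCast_zmod_val, ZMod.coe_mul_inv_eq_one a hcop.symm, sub_self]

def matrixOfCoprime (c a : ℕ) : ℤ × ℤ × ℤ × ℤ :=
  (a, (a * invMod c a - 1) / c, c, invMod c a)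

lemma matrixOfCoprime_mem_gamma0UpTo {q c a : ℕ} {X : ℝ} (hqc : q ∣ c) (hcX : (c : ℝ) ≤ X)
    (ha : a < c) (hcop : c.Coprime a) : matrixOfCoprime c a ∈ gamma0UpTo q X := by
  have hc : 0 < c := by omega
  have hd := invMod_lt hc a
  obtain ⟨b, hb⟩ := dvd_mul_invMod_sub_one hc hcop
  have hbdef : (a * invMod c a - 1 : ℤ) / c = b := by
    rw [hb, Int.mul_ediv_cancel_left _ (by exact_mod_cast hc.ne')]
  have hbc : |b| ≤ c := by
    have : (a : ℤ) * invMod c a < c * c := by exact_mod_cast Nat.mul_lt_mul'' ha hd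
    rw [abs_le]
    constructor <;> nlinarith
  have hle : ∀ z : ℤ, |z| ≤ c → (|z| : ℝ) ≤ X := fun z hz =>
    le_trans (by exact_mod_cast hz) hcX
  refine ⟨?_, Int.natCast_dvd_natCast.2 hqc, hle _ ?_, hle _ ?_, hle _ ?_, hle _ ?_⟩
  · simp only [matrixOfCoprime, hbdef]
    linarith
  · simp only [matrixOfCoprime, Int.abs_natCast]; exact_mod_cast ha.le
  · simpa only [matrixOfCoprime, hbdef] using hbc
  · simp [matrixOfCoprime]
  · simp only [matrixOfCoprime, Int.abs_natCast]; exact_mod_cast hd.le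

lemma sum_totient_le_ncard_gamma0UpTo (q M : ℕ) {X : ℝ} (hX : (q * M : ℝ) ≤ X) :
    ∑ m ∈ range (M + 1), (q * m).totient ≤ (gamma0UpTo q X).ncard := by
  set T := (range (M + 1)).sigma fun m => {a ∈ range (q * m) | (q * m).Coprime a}
  have hT : #T = ∑ m ∈ range (M + 1), (q * m).totient := by
    simp only [T, card_sigma, Nat.totient_eq_card_coprime]
  rw [← hT, ← Set.ncard_coe_finset]
  refine Set.ncard_le_ncard_of_injOn (fun s => matrixOfCoprime (q * s.1) s.2) ?_ ?_
    (gamma0UpTo_finite _ _)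
  · rintro ⟨m, a⟩ hs
    rw [mem_coe, mem_sigma, mem_filter, mem_range, mem_range] at hs
    obtain ⟨hm, ha, hcop⟩ := hs
    refine matrixOfCoprime_mem_gamma0UpTo (dvd_mul_right q m) ?_ ha hcop
    push_cast
    exact le_trans (by gcongr; exact_mod_cast Nat.le_of_lt_succ hm) hX
  · rintro ⟨m, a⟩ hs ⟨m', a'⟩ - h
    simp only [matrixOfCoprime, Prod.mk.injEq] at h
    obtain ⟨ha, -, hm, -⟩ := h
    have hq : q ≠ 0 := by
      rintro rfl
      simp [T] at hs
    rw [Nat.cast_inj] at ha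
    rw [Nat.cast_inj, Nat.mul_right_inj hq] at hm
    rw [ha, hm]

/-- there is `c > 0` such that for all integers `Q ≥ 1` and reals `X ≥ Q`,
`#Γ₀(Q, X) ≥ c · X² / (Q · log log (X + 3))`. -/
theorem stmt12 :
    ∃ c : ℝ, 0 < c ∧ ∀ (Q : ℤ) (X : ℝ), 1 ≤ Q → (Q : ℝ) ≤ X →
      c * X ^ 2 / ((Q : ℝ) * Real.log (Real.log (X + 3)))
        ≤ ({p : ℤ × ℤ × ℤ × ℤ |
            p.1 * p.2.2.2 - p.2.1 * p.2.2.1 = 1 ∧ Q ∣ p.2.2.1 ∧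
            (|p.1| : ℝ) ≤ X ∧ (|p.2.1| : ℝ) ≤ X ∧ (|p.2.2.1| : ℝ) ≤ X ∧
            (|p.2.2.2| : ℝ) ≤ X}.ncard : ℝ) := by
  refine ⟨exp (-8) / 4, by positivity, fun Q X hQ hQX => ?_⟩
  lift Q to ℕ using (by omega)
  change _ ≤ ((gamma0UpTo Q X).ncard : ℝ)
  push_cast at hQX ⊢
  have hQR : (1 : ℝ) ≤ Q := by exact_mod_cast hQ
  set t := X / Q
  have ht : 1 ≤ t := (one_le_div (by linarith)).2 hQX
  have hQt : (Q * ⌊t⌋₊ : ℝ) ≤ X := by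
    rw [← le_div_iff₀' (by linarith)]
    exact Nat.floor_le (by linarith)
  calc exp (-8) / 4 * X ^ 2 / (Q * log (log (X + 3)))
      = exp (-8) * Q / log (log (X + 3)) * (t ^ 2 / 4) := by simp only [t]; field_simp
    _ ≤ exp (-8) * Q / log (log (X + 3)) * (⌊t⌋₊ * (⌊t⌋₊ + 1) / 2) := by
        have := log_log_pos (by linarith : (3 : ℝ) ≤ X + 3)
        refine mul_le_mul_of_nonneg_left ?_ (by positivity)
        linarith [sq_le_two_mul_floor_mul_floor_add_one ht]
    _ ≤ ∑ m ∈ range (⌊t⌋₊ + 1), ((Q * m).totient : ℝ) := le_sum_range_totient_mul Q _ hQt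
    _ ≤ (gamma0UpTo Q X).ncard := by exact_mod_cast sum_totient_le_ncard_gamma0UpTo Q _ hQt
end

section
/- For every ε > 0 there is a constant C(ε) such that for all integers Q ≥ 1 and reals X ≥ 2 with Q ≤ X, the cardinality of Γ₀(Q, X) = {A ∈ Γ₀(Q) : height of A ≤ X} is at most C(ε) · X^{2+ε} / Q. -/
/-!
Write `N = ⌊X⌋₊`. A matrix of `Γ₀(Q)` with `c = 0` has `a = d = ±1`, which leaves `O(N)` of them.
If `c ≠ 0`, the matrix is determined by `(c, a, d)`, and `a` is a unit mod `c`, so for fixed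
`c` and `a` the entry `d` lies in a single residue class mod `|c|`: at most `(2N + 1) / |c| + 1`
choices. Summing over `a` and over the nonzero multiples `c` of `Q` gives `O(N² log N / Q)`, and
`log X ≤ X ^ ε / ε` absorbs the logarithm.
-/

open Finset

lemma card_Icc_filter_modEq_le {a b : ℤ} (hab : a ≤ b) (v : ℤ) {r : ℕ} (hr : 0 < r) :
    (#{x ∈ Icc a b | x ≡ v [ZMOD r]} : ℝ) ≤ (b - a + 1) / r + 1 := by
  have hab' : (a : ℚ) ≤ b := by exact_mod_cast hab
  have hcard : ((#{x ∈ Ico a (b + 1) | x ≡ v [ZMOD r]} : ℤ) : ℚ) ≤ (b - a + 1) / r + 1 := by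
    rw [Int.Ico_filter_modEq_card _ _ (by exact_mod_cast hr)]
    push_cast
    refine max_le ?_ (by positivity)
    have h₁ := Int.ceil_lt_add_one ((b + 1 - v) / (r : ℚ))
    have h₂ := Int.le_ceil ((a - v) / (r : ℚ))
    have : (b + 1 - v) / (r : ℚ) - (a - v) / r = (b - a + 1) / r := by ring
    linarith
  rw [← Ico_add_one_right_eq_Icc]
  exact_mod_cast hcard

/-- The solutions of `a * d ≡ 1 (mod c)` form at most one residue class mod `c`. -/
lemma card_Icc_filter_dvd_mul_sub_one_le (N : ℕ) {c : ℤ} (hc : c ≠ 0) (a : ℤ) :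
    (#{d ∈ Icc (-N : ℤ) N | c ∣ a * d - 1} : ℝ) ≤ (2 * N + 1) / c.natAbs + 1 := by
  obtain hempty | ⟨d₀, hd₀⟩ := eq_empty_or_nonempty {d ∈ Icc (-N : ℤ) N | c ∣ a * d - 1}
  · rw [hempty, card_empty, Nat.cast_zero]
    positivity
  have hsub : {d ∈ Icc (-N : ℤ) N | c ∣ a * d - 1} ⊆
      {d ∈ Icc (-N : ℤ) N | d ≡ d₀ [ZMOD c.natAbs]} := by
    intro d hd
    simp only [mem_filter] at hd hd₀ ⊢
    refine ⟨hd.1, (Int.modEq_iff_dvd.2 ?_).symm⟩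
    obtain ⟨t, ht⟩ := hd₀.2
    have hcoprime : IsCoprime c a := ⟨-t, d₀, by linear_combination ht⟩
    rw [Int.natAbs_dvd]
    exact hcoprime.dvd_of_dvd_mul_left (by simpa [mul_sub] using dvd_sub hd.2 hd₀.2)
  calc (#{d ∈ Icc (-N : ℤ) N | c ∣ a * d - 1} : ℝ)
      ≤ #{d ∈ Icc (-N : ℤ) N | d ≡ d₀ [ZMOD c.natAbs]} := by exact_mod_cast card_le_card hsub
    _ ≤ ((N : ℤ) - (-N : ℤ) + 1 : ℤ) / c.natAbs + 1 := by
        exact_mod_cast card_Icc_filter_modEq_le (by omega) d₀ (Int.natAbs_pos.2 hc)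
    _ = (2 * N + 1) / c.natAbs + 1 := by push_cast; ring

lemma sum_natAbs_le_two_mul_sum {s : Finset ℤ} {t : Finset ℕ} {g : ℕ → ℝ}
    (hg : ∀ n ∈ t, 0 ≤ g n) (hst : ∀ c ∈ s, c.natAbs ∈ t) :
    ∑ c ∈ s, g c.natAbs ≤ 2 * ∑ n ∈ t, g n := by
  have himage : s.image Int.natAbs ⊆ t := by
    simpa [image_subset_iff] using hst
  have hfibre : ∀ n : ℕ, #{c ∈ s | c.natAbs = n} ≤ 2 := fun n ↦ by
    calc #{c ∈ s | c.natAbs = n} ≤ #({(n : ℤ), -(n : ℤ)} : Finset ℤ) := by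
          refine card_le_card fun c hc ↦ ?_
          simp only [mem_filter] at hc
          simpa [← hc.2] using Int.natAbs_eq c
      _ ≤ 2 := card_le_two
  calc ∑ c ∈ s, g c.natAbs = ∑ n ∈ s.image Int.natAbs, #{c ∈ s | c.natAbs = n} • g n :=
        sum_comp g Int.natAbs
    _ ≤ ∑ n ∈ s.image Int.natAbs, 2 * g n := by
        refine sum_le_sum fun n hn ↦ ?_
        rw [nsmul_eq_mul]
        gcongr
        · exact hg n (himage hn)
        · exact_mod_cast hfibre n
    _ ≤ 2 * ∑ n ∈ t, g n := by
        rw [← mul_sum]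
        exact mul_le_mul_of_nonneg_left
          (sum_le_sum_of_subset_of_nonneg himage fun n hn _ ↦ hg n hn) zero_le_two

lemma Icc_filter_dvd_subset_image_mul (N Q : ℕ) :
    {n ∈ Icc 1 N | Q ∣ n} ⊆ (Icc 1 (N / Q)).image (Q * ·) := by
  intro n hn
  simp only [mem_filter, mem_Icc] at hn
  obtain ⟨⟨hn₁, hnN⟩, k, rfl⟩ := hn
  have hQ : 0 < Q := Nat.pos_of_mul_pos_right hn₁
  refine mem_image.2 ⟨k, mem_Icc.2 ⟨Nat.pos_of_mul_pos_left hn₁, ?_⟩, rfl⟩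
  exact (Nat.le_div_iff_mul_le hQ).2 (by linarith)

lemma sum_Icc_filter_dvd_le (N Q : ℕ) {A : ℝ} (hA : 0 ≤ A) :
    ∑ n ∈ Icc 1 N with Q ∣ n, (A / n + 1) ≤ A * (1 + Real.log N) / Q + N / Q := by
  have hharmonic : (harmonic (N / Q) : ℝ) ≤ 1 + Real.log N := by
    refine (harmonic_le_one_add_log _).trans ?_
    obtain h | h := Nat.eq_zero_or_pos (N / Q)
    · simp [h, Real.log_natCast_nonneg]
    · gcongr
      exact Nat.div_le_self N Q
  calc ∑ n ∈ Icc 1 N with Q ∣ n, (A / n + 1)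
      ≤ ∑ n ∈ (Icc 1 (N / Q)).image (Q * ·), (A / n + 1) :=
        sum_le_sum_of_subset_of_nonneg (Icc_filter_dvd_subset_image_mul N Q)
          fun _ _ _ ↦ by positivity
    _ ≤ ∑ k ∈ Icc 1 (N / Q), (A / (Q * k : ℕ) + 1) :=
        sum_image_le_of_nonneg fun _ _ ↦ by positivity
    _ = A / Q * harmonic (N / Q) + (N / Q : ℕ) := by
        rw [harmonic_eq_sum_Icc, sum_add_distrib]
        push_cast
        rw [mul_sum]
        congr 1
        · exact sum_congr rfl fun k _ ↦ by ring
        · simp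
    _ ≤ A * (1 + Real.log N) / Q + N / Q := by
        rw [mul_div_right_comm]
        gcongr
        exact Nat.cast_div_le

noncomputable def gamma0Box (Q N : ℕ) : Finset (ℤ × ℤ × ℤ × ℤ) :=
  {p ∈ Icc (-N : ℤ) N ×ˢ Icc (-N : ℤ) N ×ˢ Icc (-N : ℤ) N ×ˢ Icc (-N : ℤ) N |
    p.1 * p.2.2.2 - p.2.1 * p.2.2.1 = 1 ∧ (Q : ℤ) ∣ p.2.2.1}

lemma card_Icc_neg_self (N : ℕ) : #(Icc (-N : ℤ) N) = 2 * N + 1 := by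
  rw [Int.card_Icc]
  omega

lemma card_gamma0Box_filter_eq_zero_le (Q N : ℕ) :
    #{p ∈ gamma0Box Q N | p.2.2.1 = 0} ≤ 2 * (2 * N + 1) := by
  calc #{p ∈ gamma0Box Q N | p.2.2.1 = 0} ≤ #(({1, -1} : Finset ℤ) ×ˢ Icc (-N : ℤ) N) := by
        refine card_le_card_of_injOn (fun p ↦ (p.1, p.2.1)) ?_ ?_
        · rintro ⟨a, b, c, d⟩ hp
          simp only [gamma0Box, coe_filter, mem_filter, mem_product, Set.mem_ofPred_eq] at hp
          obtain ⟨⟨⟨-, hb, -, -⟩, hdet, -⟩, rfl⟩ := hp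
          simp only [coe_product, Set.mem_prod, mem_coe, mem_insert, mem_singleton]
          exact ⟨Int.eq_one_or_neg_one_of_mul_eq_one (show a * d = 1 by linarith), hb⟩
        · rintro ⟨a, b, c, d⟩ hp ⟨a', b', c', d'⟩ hp' h
          simp only [gamma0Box, coe_filter, mem_filter, Set.mem_ofPred_eq] at hp hp'
          obtain ⟨⟨-, hdet, -⟩, rfl⟩ := hp
          obtain ⟨⟨-, hdet', -⟩, rfl⟩ := hp'
          obtain ⟨rfl, rfl⟩ := Prod.mk.inj h
          have ha : a ≠ 0 := left_ne_zero_of_mul (a := a) (b := d) (by linarith)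
          simp [mul_left_cancel₀ ha (by linarith : a * d = a * d')]
    _ = 2 * (2 * N + 1) := by rw [card_product, card_Icc_neg_self]; rfl

/-- A matrix with `c ≠ 0` is determined by `(c, a, d)`, as `b * c = a * d - 1`. -/
lemma card_gamma0Box_filter_ne_zero_le_sum (Q N : ℕ) :
    #{p ∈ gamma0Box Q N | p.2.2.1 ≠ 0} ≤
      ∑ c ∈ Icc (-N : ℤ) N with c ≠ 0 ∧ (Q : ℤ) ∣ c,
        ∑ a ∈ Icc (-N : ℤ) N, #{d ∈ Icc (-N : ℤ) N | c ∣ a * d - 1} := by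
  set I := Icc (-N : ℤ) N
  calc _ ≤ #{x ∈ {c ∈ I | c ≠ 0 ∧ (Q : ℤ) ∣ c} ×ˢ I ×ˢ I | x.1 ∣ x.2.1 * x.2.2 - 1} :=
        card_le_card_of_injOn (fun p ↦ (p.2.2.1, p.1, p.2.2.2)) ?_ ?_
    _ = _ := by simp only [card_filter, sum_product]
  · rintro ⟨a, b, c, d⟩ hp
    simp only [gamma0Box, coe_filter, mem_filter, mem_product, Set.mem_ofPred_eq] at hp
    obtain ⟨⟨⟨ha, -, hc, hd⟩, hdet, hQ⟩, hc₀⟩ := hp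
    simp only [coe_filter, mem_filter, mem_product, Set.mem_ofPred_eq]
    exact ⟨⟨⟨hc, hc₀, hQ⟩, ha, hd⟩, b, by linarith⟩
  · rintro ⟨a, b, c, d⟩ hp ⟨a', b', c', d'⟩ hp' h
    simp only [gamma0Box, coe_filter, mem_filter, Set.mem_ofPred_eq] at hp hp'
    obtain ⟨⟨-, hdet, -⟩, hc₀⟩ := hp
    obtain ⟨⟨-, hdet', -⟩, -⟩ := hp'
    simp only [Prod.mk.injEq] at h
    obtain ⟨rfl, rfl, rfl⟩ := h
    simp [mul_right_cancel₀ hc₀ (by linarith : b * c = b' * c)]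

lemma card_gamma0Box_filter_ne_zero_le (Q N : ℕ) :
    (#{p ∈ gamma0Box Q N | p.2.2.1 ≠ 0} : ℝ) ≤
      2 * (2 * N + 1) * ((2 * N + 1) * (1 + Real.log N) / Q + N / Q) := by
  set I := Icc (-N : ℤ) N
  set C : Finset ℤ := {c ∈ I | c ≠ 0 ∧ (Q : ℤ) ∣ c}
  have hC : ∀ c ∈ C, c.natAbs ∈ {n ∈ Icc 1 N | Q ∣ n} := by
    intro c hc
    simp only [C, I, mem_filter, mem_Icc] at hc ⊢
    obtain ⟨⟨h₁, h₂⟩, hc₀, hQ⟩ := hc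
    exact ⟨⟨Int.natAbs_pos.2 hc₀, by omega⟩, Int.natCast_dvd.1 hQ⟩
  calc (#{p ∈ gamma0Box Q N | p.2.2.1 ≠ 0} : ℝ)
      ≤ ∑ c ∈ C, ∑ a ∈ I, (#{d ∈ I | c ∣ a * d - 1} : ℝ) := by
        exact_mod_cast card_gamma0Box_filter_ne_zero_le_sum Q N
    _ ≤ ∑ c ∈ C, ∑ a ∈ I, ((2 * N + 1) / c.natAbs + 1 : ℝ) := by
        gcongr with c hc a
        exact card_Icc_filter_dvd_mul_sub_one_le N (mem_filter.1 hc).2.1 a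
    _ = (2 * N + 1) * ∑ c ∈ C, ((2 * N + 1) / c.natAbs + 1 : ℝ) := by
        rw [mul_sum]
        refine sum_congr rfl fun c _ ↦ ?_
        rw [sum_const, card_Icc_neg_self, nsmul_eq_mul]
        push_cast
        ring
    _ ≤ (2 * N + 1) * (2 * ∑ n ∈ Icc 1 N with Q ∣ n, ((2 * N + 1) / n + 1 : ℝ)) := by
        gcongr
        exact sum_natAbs_le_two_mul_sum (g := fun n : ℕ ↦ (2 * N + 1) / (n : ℝ) + 1)
          (fun _ _ ↦ by positivity) hC
    _ ≤ (2 * N + 1) * (2 * ((2 * N + 1) * (1 + Real.log N) / Q + N / Q)) := by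
        gcongr
        exact sum_Icc_filter_dvd_le N Q (by positivity)
    _ = _ := by ring

lemma card_gamma0Box_le (Q N : ℕ) :
    (#(gamma0Box Q N) : ℝ) ≤
      2 * (2 * N + 1) + 2 * (2 * N + 1) * ((2 * N + 1) * (1 + Real.log N) / Q + N / Q) := by
  rw [← card_filter_add_card_filter_not (fun p : ℤ × ℤ × ℤ × ℤ ↦ p.2.2.1 = 0), Nat.cast_add]
  gcongr
  · exact_mod_cast card_gamma0Box_filter_eq_zero_le Q N
  · exact card_gamma0Box_filter_ne_zero_le Q N

lemma gamma0Box_bound_le_rpow {ε X q : ℝ} (N : ℕ) (hε : 0 < ε) (hNX : N ≤ X) (hq : 1 ≤ q)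
    (hqX : q ≤ X) :
    2 * (2 * N + 1) + 2 * (2 * N + 1) * ((2 * N + 1) * (1 + Real.log N) / q + N / q)
      ≤ (30 + 18 / ε) * X ^ (2 + ε) / q := by
  have hX : 1 ≤ X := hq.trans hqX
  have hlog : Real.log N ≤ Real.log X := by
    rcases N.eq_zero_or_pos with rfl | hN
    · simpa using Real.log_nonneg hX
    · exact Real.log_le_log (by positivity) hNX
  have hXq : X ≤ X ^ 2 / q := by
    rw [le_div_iff₀ (by linarith)]
    nlinarith
  have hlogX : Real.log X ≤ X ^ ε / ε := Real.log_le_rpow_div (by linarith) hε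
  have hrpow : 1 ≤ X ^ ε := Real.one_le_rpow hX hε.le
  have hlogN : 0 ≤ Real.log N := Real.log_natCast_nonneg N
  calc _ ≤ 2 * (3 * X) + 2 * (3 * X) * (3 * X * (1 + Real.log X) / q + X / q) := by
        gcongr <;> linarith
    _ ≤ 6 * (X ^ 2 / q) + 6 * X * (3 * X * (1 + Real.log X) / q + X / q) := by linarith
    _ = X ^ 2 / q * (30 + 18 * Real.log X) := by ring
    _ ≤ X ^ 2 / q * ((30 + 18 / ε) * X ^ ε) := by
        gcongr
        have : (30 + 18 / ε) * X ^ ε = 30 * X ^ ε + 18 * (X ^ ε / ε) := by ring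
        linarith
    _ = _ := by
        rw [Real.rpow_add (by linarith), Real.rpow_two]
        ring

lemma abs_intCast_le_iff_mem_Icc_floor {X : ℝ} (hX : 0 ≤ X) (a : ℤ) :
    |(a : ℝ)| ≤ X ↔ a ∈ Icc (-⌊X⌋₊ : ℤ) ⌊X⌋₊ := by
  rw [mem_Icc, ← abs_le, ← Int.natCast_natAbs, Nat.cast_le, Nat.le_floor_iff hX, Nat.cast_natAbs,
    Int.cast_abs]

/-- for every `ε > 0` there is `C(ε)` such that for all integers `Q ≥ 1`
and reals `X ≥ 2` with `Q ≤ X`, `#Γ₀(Q, X) ≤ C(ε) · X^{2+ε} / Q`. -/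
theorem stmt13 (ε : ℝ) (hε : 0 < ε) :
    ∃ C : ℝ, 0 < C ∧ ∀ (Q : ℤ) (X : ℝ), 1 ≤ Q → 2 ≤ X → (Q : ℝ) ≤ X →
      ({p : ℤ × ℤ × ℤ × ℤ |
          p.1 * p.2.2.2 - p.2.1 * p.2.2.1 = 1 ∧ Q ∣ p.2.2.1 ∧
          (|p.1| : ℝ) ≤ X ∧ (|p.2.1| : ℝ) ≤ X ∧ (|p.2.2.1| : ℝ) ≤ X ∧
          (|p.2.2.2| : ℝ) ≤ X}.ncard : ℝ)
        ≤ C * X ^ (2 + ε) / (Q : ℝ) := by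
  refine ⟨30 + 18 / ε, by positivity, fun Q X hQ hX hQX ↦ ?_⟩
  lift Q to ℕ using (by omega)
  have hX₀ : 0 ≤ X := by linarith
  have hbox : {p : ℤ × ℤ × ℤ × ℤ |
          p.1 * p.2.2.2 - p.2.1 * p.2.2.1 = 1 ∧ (Q : ℤ) ∣ p.2.2.1 ∧
          (|p.1| : ℝ) ≤ X ∧ (|p.2.1| : ℝ) ≤ X ∧ (|p.2.2.1| : ℝ) ≤ X ∧
          (|p.2.2.2| : ℝ) ≤ X} = gamma0Box Q ⌊X⌋₊ := by
    ext ⟨a, b, c, d⟩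
    simp only [gamma0Box, coe_filter, mem_product, Set.mem_ofPred_eq,
      ← abs_intCast_le_iff_mem_Icc_floor hX₀]
    tauto
  rw [hbox, Set.ncard_coe_finset, Int.cast_natCast]
  exact (card_gamma0Box_le Q ⌊X⌋₊).trans
    (gamma0Box_bound_le_rpow _ hε (Nat.floor_le hX₀) (by exact_mod_cast hQ) (by exact_mod_cast hQX))
end
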